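/- arXiv:2412.00628 — 8 statements merged into one kernel-verified Lean document; each statement's English description precedes it below -/
import Mathlib

section
/- For any bounded sequence x of complex numbers, the logarithmic mean of x and the logarithmic mean of the Cesàro mean of x agree asymptotically: (1/log(n+2)) ∑_{k=0}^n x_k/(k+1) − (1/log(n+2)) ∑_{k=0}^n (1/(k+1)) · ((1/(k+1)) ∑_{l=0}^k x_l) tends to 0 as n → ∞. -/
open Filter Finset

/-!
Summation by parts turns the difference of the two unnormalised sums into
`(n + 1) / (n + 2) * C n - ∑_{k ≤ n} C k / ((k + 1) (k + 2))`, where `C` is the Cesàro mean.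
Since `‖C k‖ ≤ sup ‖x‖` and `∑ 1 / ((k + 1) (k + 2))` telescopes to less than `1`, this difference
is bounded by `2 sup ‖x‖`, so it vanishes after division by `log (n + 2) → ∞`.
-/

theorem sum_range_inv_succ_mul_succ_succ (n : ℕ) :
    ∑ k ∈ range n, (((k : ℝ) + 1) * (k + 2))⁻¹ = n / (n + 1) := by
  induction n with
  | zero => simp
  | succ n ih =>
    rw [sum_range_succ, ih]
    push_cast
    field_simp
    ring

theorem tendsto_inv_log_nat_add_two :
    Tendsto (fun n : ℕ => (Real.log (n + 2))⁻¹) atTop (nhds 0) :=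
  (Real.tendsto_log_atTop.comp
    (tendsto_atTop_add_const_right _ 2 tendsto_natCast_atTop_atTop)).inv_tendsto_atTop

section
variable {𝕜 : Type*}

def cesaroMean [DivisionRing 𝕜] (x : ℕ → 𝕜) (n : ℕ) : 𝕜 :=
  ((n : 𝕜) + 1)⁻¹ * ∑ k ∈ range (n + 1), x k

theorem norm_cesaroMean_le [RCLike 𝕜] {x : ℕ → 𝕜} {K : ℝ} (hK : ∀ n, ‖x n‖ ≤ K) (n : ℕ) :
    ‖cesaroMean x n‖ ≤ K := by
  have hsum : ‖∑ k ∈ range (n + 1), x k‖ ≤ (n + 1) * K := by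
    simpa using norm_sum_le_of_le (range (n + 1)) fun k _ => hK k
  rw [cesaroMean, norm_mul, norm_inv, ← Nat.cast_succ, RCLike.norm_natCast, Nat.cast_succ,
    inv_mul_le_iff₀ (by positivity)]
  exact hsum

theorem sum_div_succ_sub_sum_cesaroMean_eq [Field 𝕜] [CharZero 𝕜] (x : ℕ → 𝕜) (n : ℕ) :
    ∑ k ∈ range (n + 1), x k / (k + 1) - ∑ k ∈ range (n + 1), ((k : 𝕜) + 1)⁻¹ * cesaroMean x k
      = (n + 1) / (n + 2) * cesaroMean x n
        - ∑ k ∈ range (n + 1), cesaroMean x k / ((k + 1) * (k + 2)) := by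
  induction n with
  | zero => simp [cesaroMean, div_eq_inv_mul]
  | succ n ih =>
    have h2 : (n : 𝕜) + 2 ≠ 0 := by norm_cast
    have h3 : (n : 𝕜) + 3 ≠ 0 := by norm_cast
    rw [sum_range_succ (fun k => x k / _), sum_range_succ (fun k => ((k : 𝕜) + 1)⁻¹ * _),
      sum_range_succ (fun k => cesaroMean x k / _), add_sub_add_comm, ih]
    simp only [cesaroMean, sum_range_succ x (n + 1)]
    generalize ∑ k ∈ range (n + 1), x k = S
    generalize ∑ k ∈ range (n + 1), cesaroMean x k / ((k + 1) * (k + 2)) = T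
    push_cast
    rw [show (n : 𝕜) + 1 + 1 = n + 2 by ring, show (n : 𝕜) + 1 + 2 = n + 3 by ring]
    field_simp
    ring

theorem norm_sum_div_succ_sub_sum_cesaroMean_le [RCLike 𝕜] {x : ℕ → 𝕜} {K : ℝ}
    (hK : ∀ n, ‖x n‖ ≤ K) (n : ℕ) :
    ‖∑ k ∈ range (n + 1), x k / (k + 1) - ∑ k ∈ range (n + 1), ((k : 𝕜) + 1)⁻¹ * cesaroMean x k‖
      ≤ 2 * K := by
  have hK0 : 0 ≤ K := (norm_nonneg _).trans (hK 0)
  have hn : ((n : ℝ) + 1) / (n + 2) ≤ 1 := (div_le_one (by positivity)).2 (by linarith)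
  have hnorm (m a : ℕ) : ‖(m : 𝕜) + a‖ = m + a := by
    exact_mod_cast RCLike.norm_natCast (K := 𝕜) (m + a)
  have hfirst : ‖((n : 𝕜) + 1) / (n + 2) * cesaroMean x n‖ ≤ K := by
    rw [norm_mul, norm_div, ← Nat.cast_one, ← Nat.cast_two, hnorm, hnorm]
    push_cast
    simpa using mul_le_mul hn (norm_cesaroMean_le hK n) (norm_nonneg _) zero_le_one
  have hsecond : ‖∑ k ∈ range (n + 1), cesaroMean x k / ((k + 1) * (k + 2))‖ ≤ K := by
    calc ‖∑ k ∈ range (n + 1), cesaroMean x k / ((k + 1) * (k + 2))‖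
        ≤ ∑ k ∈ range (n + 1), K * (((k : ℝ) + 1) * (k + 2))⁻¹ := by
          refine norm_sum_le_of_le _ fun k _ => ?_
          rw [norm_div, norm_mul, ← Nat.cast_one, ← Nat.cast_two, hnorm, hnorm, div_eq_mul_inv]
          push_cast
          exact mul_le_mul_of_nonneg_right (norm_cesaroMean_le hK k) (by positivity)
      _ ≤ K := by
          rw [← mul_sum, sum_range_inv_succ_mul_succ_succ]
          push_cast
          simpa [add_assoc, one_add_one_eq_two] using mul_le_mul_of_nonneg_left hn hK0
  rw [sum_div_succ_sub_sum_cesaroMean_eq]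
  exact (norm_sub_le _ _).trans ((add_le_add hfirst hsecond).trans_eq (two_mul K).symm)
end

/-- For any bounded sequence `x` of complex numbers, the logarithmic mean
of `x` and the logarithmic mean of the Cesàro mean of `x` agree asymptotically. -/
theorem log_mean_sub_log_mean_cesaro_tendsto_zero
    (x : ℕ → ℂ) (hx : ∃ K : ℝ, ∀ n, ‖x n‖ ≤ K) :
    Tendsto (fun n : ℕ =>
        ((Real.log (n + 2) : ℂ))⁻¹ * ∑ k ∈ range (n + 1), x k / (k + 1)
      - ((Real.log (n + 2) : ℂ))⁻¹ * ∑ k ∈ range (n + 1),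
          ((k : ℂ) + 1)⁻¹ * (((k : ℂ) + 1)⁻¹ * ∑ l ∈ range (k + 1), x l))
      atTop (nhds 0) := by
  obtain ⟨K, hK⟩ := hx
  have hlog : Tendsto (fun n : ℕ => ((Real.log (n + 2) : ℂ))⁻¹) atTop (nhds 0) := by
    simpa [Function.comp_def] using
      (Complex.continuous_ofReal.tendsto 0).comp tendsto_inv_log_nat_add_two
  exact (hlog.zero_mul_isBoundedUnder_le (isBoundedUnder_of
    ⟨2 * K, norm_sum_div_succ_sub_sum_cesaroMean_le hK⟩)).congr fun n => mul_sub _ _ _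
end

section
/- If a bounded sequence x of complex numbers has Cesàro mean converging to c, then its logarithmic mean also converges to c: if (1/(n+1)) ∑_{k=0}^n x_k → c, then (1/log(n+2)) ∑_{k=0}^n x_k/(k+1) → c as n → ∞. -/
/-!
With `a n = (n + 1)⁻¹ * ∑_{k ≤ n} x k` the Cesàro means, Abel summation gives
`∑_{k ≤ n} x k / (k + 1) = a n + ∑_{k < n} a k / (k + 2)`.
The last sum is a weighted mean of the `a k` with weights `1 / (k + 2)`, whose total is
`harmonic (n + 1) - 1 = log n + O(1)`; since these weights are nonnegative with divergent total,
the weighted mean tends to `c`, and dividing by `log (n + 2)` gives the claim.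
-/

open Filter Finset Asymptotics Topology

theorem Filter.Tendsto.weighted_cesaro_smul {E : Type*} [NormedAddCommGroup E] [NormedSpace ℝ E]
    {u : ℕ → E} {l : E} {w : ℕ → ℝ} (h : Tendsto u atTop (𝓝 l)) (hw : ∀ n, 0 ≤ w n)
    (hW : Tendsto (fun n => ∑ i ∈ range n, w i) atTop atTop) :
    Tendsto (fun n => (∑ i ∈ range n, w i)⁻¹ • ∑ i ∈ range n, w i • u i) atTop (𝓝 l) := by
  rw [← tendsto_sub_nhds_zero_iff, ← isLittleO_one_iff ℝ]
  have hterm : (fun i => w i • (u i - l)) =o[atTop] w := by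
    simpa using (isBigO_refl w atTop).smul_isLittleO
      ((isLittleO_one_iff ℝ).2 (tendsto_sub_nhds_zero_iff.2 h))
  apply ((isBigO_refl (fun n => (∑ i ∈ range n, w i)⁻¹) atTop).smul_isLittleO
    (hterm.sum_range hw hW)).congr' _ _
  · filter_upwards [hW.eventually_gt_atTop 0] with n hn
    simp only [smul_sub, sum_sub_distrib, ← sum_smul, smul_smul, inv_mul_cancel₀ hn.ne', one_smul]
  · filter_upwards [hW.eventually_gt_atTop 0] with n hn
    rw [smul_eq_mul, inv_mul_cancel₀ hn.ne']

theorem sum_range_div_succ_eq {K : Type*} [Field K] [CharZero K] (x : ℕ → K) (n : ℕ) :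
    ∑ k ∈ range (n + 1), x k / (k + 1) =
      ((n : K) + 1)⁻¹ * ∑ k ∈ range (n + 1), x k +
        ∑ k ∈ range n, ((k : K) + 1)⁻¹ * (∑ j ∈ range (k + 1), x j) / (k + 2) := by
  induction n with
  | zero => simp
  | succ n ih =>
    rw [sum_range_succ (fun k => x k / ((k : K) + 1)), ih,
      sum_range_succ (fun k => ((k : K) + 1)⁻¹ * (∑ j ∈ range (k + 1), x j) / (k + 2)) n,
      sum_range_succ x (n + 1)]
    generalize ∑ j ∈ range (n + 1), x j = S
    generalize ∑ k ∈ range n, ((k : K) + 1)⁻¹ * (∑ j ∈ range (k + 1), x j) / (k + 2) = T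
    have h1 : (n : K) + 1 ≠ 0 := by norm_cast
    have h2 : (n : K) + 2 ≠ 0 := by norm_cast
    push_cast
    rw [add_assoc (n : K), one_add_one_eq_two]
    field_simp
    ring

theorem sum_range_inv_add_two_eq (n : ℕ) :
    ∑ k ∈ range n, ((k : ℝ) + 2)⁻¹ = harmonic (n + 1) - 1 := by
  simp only [harmonic, sum_range_succ', Rat.cast_add, Rat.cast_sum]
  push_cast
  ring_nf

theorem log_add_two_sub_one_le_sum_range_inv_add_two (n : ℕ) :
    Real.log (n + 2) - 1 ≤ ∑ k ∈ range n, ((k : ℝ) + 2)⁻¹ := by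
  have : Real.log (n + 2) ≤ harmonic (n + 1) := by
    simpa [add_assoc, one_add_one_eq_two] using log_add_one_le_harmonic (n + 1)
  rw [sum_range_inv_add_two_eq]
  linarith

theorem sum_range_inv_add_two_le_log_add_two (n : ℕ) :
    ∑ k ∈ range n, ((k : ℝ) + 2)⁻¹ ≤ Real.log (n + 2) := by
  have := harmonic_le_one_add_log (n + 1)
  have hlog : Real.log ((n + 1 : ℕ) : ℝ) ≤ Real.log (n + 2) :=
    Real.log_le_log (by positivity) (by push_cast; linarith)
  rw [sum_range_inv_add_two_eq]
  linarith

theorem tendsto_log_add_two_atTop : Tendsto (fun n : ℕ => Real.log (n + 2)) atTop atTop :=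
  Real.tendsto_log_atTop.comp <| tendsto_atTop_add_const_right _ _ tendsto_natCast_atTop_atTop

theorem isEquivalent_sum_range_inv_add_two_log :
    (fun n : ℕ => ∑ k ∈ range n, ((k : ℝ) + 2)⁻¹) ~[atTop] fun n => Real.log (n + 2) := by
  have hbdd : (fun n : ℕ => ∑ k ∈ range n, ((k : ℝ) + 2)⁻¹ - Real.log (n + 2)) =O[atTop]
      (fun _ => (1 : ℝ)) := by
    refine isBigO_of_le _ fun n => ?_
    rw [Real.norm_eq_abs, norm_one, abs_le]
    constructor <;> linarith [log_add_two_sub_one_le_sum_range_inv_add_two n,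
      sum_range_inv_add_two_le_log_add_two n]
  exact hbdd.trans_isLittleO
    ((isLittleO_one_left_iff ℝ).2 (tendsto_norm_atTop_atTop.comp tendsto_log_add_two_atTop))

theorem log_mean_tendsto_of_cesaro_tendsto_general
    (x : ℕ → ℂ) (c : ℂ)
    (hces : Tendsto (fun n : ℕ => ((n : ℂ) + 1)⁻¹ * ∑ k ∈ range (n + 1), x k)
      atTop (nhds c)) :
    Tendsto (fun n : ℕ =>
        ((Real.log (n + 2) : ℂ))⁻¹ * ∑ k ∈ range (n + 1), x k / (k + 1))
      atTop (nhds c) := by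
  have hW := isEquivalent_sum_range_inv_add_two_log
  have hWtop := hW.symm.tendsto_atTop tendsto_log_add_two_atTop
  have hmean := hces.weighted_cesaro_smul (fun k => by positivity) hWtop
  have hratio := (isEquivalent_iff_tendsto_one
    (tendsto_log_add_two_atTop.eventually_gt_atTop 0 |>.mono fun _ h => h.ne')).1 hW
  have hlim := (tendsto_log_add_two_atTop.inv_tendsto_atTop.smul hces).add (hratio.smul hmean)
  rw [zero_smul, one_smul, zero_add] at hlim
  refine hlim.congr' ?_
  filter_upwards [hWtop.eventually_gt_atTop 0] with n hWn
  have hsmul : ∑ i ∈ range n, ((i : ℝ) + 2)⁻¹ • (((i : ℂ) + 1)⁻¹ * ∑ k ∈ range (i + 1), x k) =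
      ∑ i ∈ range n, ((i : ℂ) + 1)⁻¹ * (∑ k ∈ range (i + 1), x k) / (i + 2) :=
    sum_congr rfl fun i _ => by rw [Complex.real_smul]; push_cast; ring
  rw [Pi.div_apply, smul_smul, hsmul, div_mul_eq_mul_div, mul_inv_cancel₀ hWn.ne', one_div,
    Pi.inv_apply, ← smul_add, Complex.real_smul, sum_range_div_succ_eq, Complex.ofReal_inv]

/-- If a bounded sequence `x` of complex numbers has Cesàro mean converging
to `c`, then its logarithmic mean also converges to `c`. -/
theorem log_mean_tendsto_of_cesaro_tendsto
    (x : ℕ → ℂ) (hx : ∃ K : ℝ, ∀ n, ‖x n‖ ≤ K) (c : ℂ)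
    (hces : Tendsto (fun n : ℕ => ((n : ℂ) + 1)⁻¹ * ∑ k ∈ range (n + 1), x k)
      atTop (nhds c)) :
    Tendsto (fun n : ℕ =>
        ((Real.log (n + 2) : ℂ))⁻¹ * ∑ k ∈ range (n + 1), x k / (k + 1))
      atTop (nhds c) :=
  log_mean_tendsto_of_cesaro_tendsto_general x c hces
end

section
/- Let φ : ℕ → ℝ_{>0} be increasing with φ(n) → ∞, let a : ℕ → ℝ be a sequence with (1/φ(n)) ∑_{k=0}^n |a_k| bounded, and let (k_i) be a strictly increasing sequence of positive integers such that φ(k_{i+1})/φ(k_i) → 1 and (1/φ(k_i)) ∑_{k=k_{i-1}+1}^{k_i} |a_k| → 0. For each n let k_{i_n} = min{k_i : k_i ≥ n}. Then (1/φ(n)) ∑_{k=0}^n a_k − (1/φ(k_{i_n})) ∑_{k=0}^{k_{i_n}} a_k → 0 as n → ∞. -/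
open Filter Finset

/-!
Write `S_n = ∑_{k≤n} a_k`, let `K` bound `(1/φ(n)) ∑_{k≤n} |a_k|`, and let `m = k_{i_n}` and
`l = k_{i_n - 1}`, so that `l < n ≤ m`. Splitting `S_m` at `n` gives
`|S_n/φ(n) - S_m/φ(m)| ≤ |S_n| (1/φ(n) - 1/φ(m)) + (1/φ(m)) ∑_{n<k≤m} |a_k|
  ≤ K (1 - φ(l)/φ(m)) + (1/φ(m)) ∑_{l<k≤m} |a_k|`,
and both terms on the right tend to `0` by the two hypotheses on the subsequence.
-/

namespace StrictMono

variable {ks : ℕ → ℕ}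

theorem le_apply_sInf_setOf_le_apply (hks : StrictMono ks) (n : ℕ) :
    n ≤ ks (sInf {i | n ≤ ks i}) :=
  Nat.sInf_mem (s := {i | n ≤ ks i}) ⟨n, hks.le_apply⟩

theorem lt_sInf_setOf_le_apply_iff (hks : StrictMono ks) {n j : ℕ} :
    j < sInf {i | n ≤ ks i} ↔ ks j < n := by
  constructor
  · intro hj
    simpa using Nat.notMem_of_lt_sInf hj
  · intro hj
    by_contra! hle
    exact (hks.le_apply_sInf_setOf_le_apply n |>.trans (hks.monotone hle)).not_gt hj

theorem tendsto_sInf_setOf_le_apply (hks : StrictMono ks) :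
    Tendsto (fun n => sInf {i | n ≤ ks i}) atTop atTop :=
  tendsto_atTop_atTop.2 fun j =>
    ⟨ks j + 1, fun _ hn => hks.lt_sInf_setOf_le_apply_iff.2 (by omega) |>.le⟩

end StrictMono

theorem abs_inv_mul_sub_inv_mul_add_le {α : Type*} [Field α] [LinearOrder α]
    [IsStrictOrderedRing α] {p q S B K b : α} (hp : 0 < p) (hpq : p ≤ q)
    (hS : |S| ≤ p * K) (hB : |B| ≤ b) :
    |p⁻¹ * S - q⁻¹ * (S + B)| ≤ K * (1 - p / q) + q⁻¹ * b := by
  have hq : 0 < q := hp.trans_le hpq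
  have hinv : 0 ≤ p⁻¹ - q⁻¹ := sub_nonneg.2 (inv_anti₀ hp hpq)
  calc |p⁻¹ * S - q⁻¹ * (S + B)|
      = |(p⁻¹ - q⁻¹) * S - q⁻¹ * B| := by ring_nf
    _ ≤ (p⁻¹ - q⁻¹) * |S| + q⁻¹ * |B| := by
        grw [abs_sub, abs_mul, abs_mul, abs_of_nonneg hinv, abs_of_pos (inv_pos.2 hq)]
    _ ≤ (p⁻¹ - q⁻¹) * (p * K) + q⁻¹ * b := by gcongr
    _ = K * (1 - p / q) + q⁻¹ * b := by field_simp

theorem abs_inv_mul_sum_range_sub_inv_mul_sum_range_le {φ : ℕ → ℝ} (hφpos : ∀ n, 0 < φ n)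
    (hφmono : Monotone φ) {a : ℕ → ℝ} {K : ℝ}
    (hK : ∀ n, (φ n)⁻¹ * ∑ k ∈ range (n + 1), |a k| ≤ K) {l n m : ℕ} (hln : l ≤ n)
    (hnm : n ≤ m) :
    |(φ n)⁻¹ * ∑ k ∈ range (n + 1), a k - (φ m)⁻¹ * ∑ k ∈ range (m + 1), a k|
      ≤ K * (1 - φ l / φ m) + (φ m)⁻¹ * ∑ k ∈ Ioc l m, |a k| := by
  have hK0 : 0 ≤ K := (hK 0).trans' (by have := hφpos 0; positivity)
  have hsplit : ∑ k ∈ range (m + 1), a k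
      = ∑ k ∈ range (n + 1), a k + ∑ k ∈ Ioc n m, a k := by
    rw [← Ico_add_one_add_one_eq_Ioc, sum_range_add_sum_Ico _ (by omega)]
  have hS : |∑ k ∈ range (n + 1), a k| ≤ φ n * K :=
    (abs_sum_le_sum_abs _ _).trans ((inv_mul_le_iff₀ (hφpos n)).1 (hK n))
  have hB : |∑ k ∈ Ioc n m, a k| ≤ ∑ k ∈ Ioc l m, |a k| :=
    (abs_sum_le_sum_abs _ _).trans
      (sum_le_sum_of_subset_of_nonneg (Ioc_subset_Ioc_left hln) fun _ _ _ => abs_nonneg _)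
  rw [hsplit]
  refine (abs_inv_mul_sub_inv_mul_add_le (hφpos n) (hφmono hnm) hS hB).trans ?_
  have := hφpos m
  gcongr
  exact hφmono hln

theorem avg_sub_subseq_avg_tendsto_zero_general
    (φ : ℕ → ℝ) (hφpos : ∀ n, 0 < φ n) (hφmono : Monotone φ)
    (a : ℕ → ℝ)
    (hbd : ∃ K : ℝ, ∀ n, (φ n)⁻¹ * ∑ k ∈ range (n + 1), |a k| ≤ K)
    (ks : ℕ → ℕ) (hks : StrictMono ks)
    (hratio : Tendsto (fun i => φ (ks (i + 1)) / φ (ks i)) atTop (nhds 1))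
    (hblock : Tendsto (fun i =>
        (φ (ks (i + 1)))⁻¹ * ∑ k ∈ Finset.Ioc (ks i) (ks (i + 1)), |a k|)
      atTop (nhds 0)) :
    Tendsto (fun n : ℕ =>
        (φ n)⁻¹ * ∑ k ∈ range (n + 1), a k
      - (φ (ks (sInf {i | n ≤ ks i})))⁻¹ *
          ∑ k ∈ range (ks (sInf {i | n ≤ ks i}) + 1), a k)
      atTop (nhds 0) := by
  obtain ⟨K, hK⟩ := hbd
  have hbound : Tendsto (fun j => K * (1 - φ (ks j) / φ (ks (j + 1)))
      + (φ (ks (j + 1)))⁻¹ * ∑ k ∈ Ioc (ks j) (ks (j + 1)), |a k|) atTop (nhds 0) := by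
    have hratio' : Tendsto (fun j => φ (ks j) / φ (ks (j + 1))) atTop (nhds 1) := by
      simpa only [inv_div, inv_one] using hratio.inv₀ one_ne_zero
    simpa using ((tendsto_const_nhds (x := (1 : ℝ)).sub hratio').const_mul K).add hblock
  refine squeeze_zero_norm' ?_
    (hbound.comp ((tendsto_sub_atTop_nat 1).comp hks.tendsto_sInf_setOf_le_apply))
  filter_upwards [eventually_gt_atTop (ks 0)] with n hn
  have hpos : 0 < sInf {i | n ≤ ks i} := hks.lt_sInf_setOf_le_apply_iff.2 hn
  have hprev : ks (sInf {i | n ≤ ks i} - 1) < n :=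
    hks.lt_sInf_setOf_le_apply_iff.1 (Nat.sub_one_lt_of_lt hpos)
  simpa [Nat.sub_add_cancel hpos] using
    abs_inv_mul_sum_range_sub_inv_mul_sum_range_le hφpos hφmono hK hprev.le
      (hks.le_apply_sInf_setOf_le_apply n)

/-- subsequence-averaging lemma, Lemma 4.8 variant.
`ks i` plays the role of `k_i`; the block from `k_{i-1}+1` to `k_i` is `Finset.Ioc (ks i) (ks (i+1))`
normalised by `φ(k_{i+1})`, matching the paper's indexing `(1/φ(k_i)) ∑_{k=k_{i-1}+1}^{k_i}`.
`sInf {i | n ≤ ks i}` picks the smallest member of the sequence that is `≥ n`. -/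
theorem avg_sub_subseq_avg_tendsto_zero
    (φ : ℕ → ℝ) (hφpos : ∀ n, 0 < φ n) (hφmono : Monotone φ)
    (hφtop : Tendsto φ atTop atTop)
    (a : ℕ → ℝ)
    (hbd : ∃ K : ℝ, ∀ n, (φ n)⁻¹ * ∑ k ∈ range (n + 1), |a k| ≤ K)
    (ks : ℕ → ℕ) (hks : StrictMono ks) (hkspos : 0 < ks 0)
    (hratio : Tendsto (fun i => φ (ks (i + 1)) / φ (ks i)) atTop (nhds 1))
    (hblock : Tendsto (fun i =>
        (φ (ks (i + 1)))⁻¹ * ∑ k ∈ Finset.Ioc (ks i) (ks (i + 1)), |a k|)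
      atTop (nhds 0)) :
    Tendsto (fun n : ℕ =>
        (φ n)⁻¹ * ∑ k ∈ range (n + 1), a k
      - (φ (ks (sInf {i | n ≤ ks i})))⁻¹ *
          ∑ k ∈ range (ks (sInf {i | n ≤ ks i}) + 1), a k)
      atTop (nhds 0) :=
  avg_sub_subseq_avg_tendsto_zero_general φ hφpos hφmono a hbd ks hks hratio hblock
end

section
/- Let D be a self-adjoint operator on a separable Hilbert space H with compact resolvent such that Tr(e^{−tD²}) · t^{d/2} → C as t → 0⁺ for some constants C > 0 and d > 0, and let a ∈ B(H) be such that Tr(a e^{−tD²}) · t^{d/2} → C(a) as t → 0⁺. Writing P_λ = χ_{[−λ,λ]}(D), the limit lim_{λ→∞} Tr(P_λ a P_λ)/Tr(P_λ) exists and equals C(a)/C. -/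
/-!
Karamata's Tauberian argument. For weights `w k ≥ 0` and exponents `s k ≥ 0` put
`T_t(h) = t^ρ ∑ₖ w k · h(e^{-t s k})`, and suppose `T_t(id) → A` as `t → 0⁺`. Rescaling `t`
gives `T_t(x^{n+1}) → A (n+1)^{-ρ} = (A/Γ(ρ)) ∫₀^∞ h(e^{-u}) u^{ρ-1} du` for `h = x^{n+1}`, hence
the same limit formula for `h = x · p(x)` with `p` a polynomial. Since `|T_t(x g)| ≤ ‖g‖_∞ T_t(id)`,
Weierstrass approximation extends it to `h = x · g(x)` with `g` continuous, and squeezing the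
indicator of `[e^{-1}, 1]` between piecewise linear such functions gives
`t^ρ ∑_{t s_k ≤ 1} w k → A / Γ(ρ + 1)`.

With `s k = λ_k²`, `t = λ^{-2}` and `ρ = d/2` this says `λ^{-d} Tr(P_λ) → C / Γ(d/2 + 1)`, and,
after splitting `c k` into real and imaginary parts and shifting each by `sup ‖c k‖` to make it
nonnegative, `λ^{-d} Tr(P_λ a P_λ) → C(a) / Γ(d/2 + 1)`; the quotient tends to `C(a) / C`.
-/

open Filter Finset MeasureTheory Set Topology Real

section Squeeze

variable {ι : Type*} {l : Filter ι}

theorem tendsto_of_forall_approx {F : ι → ℝ} {a : ℝ}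
    (h : ∀ ε > 0, ∃ G : ι → ℝ, ∃ b, Tendsto G l (𝓝 b) ∧
      (∀ᶠ x in l, |F x - G x| ≤ ε) ∧ |a - b| ≤ ε) :
    Tendsto F l (𝓝 a) := by
  refine Metric.tendsto_nhds.2 fun ε hε => ?_
  obtain ⟨G, b, hG, hFG, hab⟩ := h (ε / 3) (by positivity)
  filter_upwards [hFG, Metric.tendsto_nhds.1 hG (ε / 3) (by positivity)] with x hFx hGx
  rw [Real.dist_eq] at hGx ⊢
  linarith [abs_sub_le (F x) (G x) b, abs_sub_le (F x) b a, abs_sub_comm a b]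

theorem tendsto_of_continuousAt_of_squeeze {F : ι → ℝ} {f : ℝ → ℝ} {c₀ : ℝ}
    (hf : ContinuousAt f c₀)
    (hupper : ∀ᶠ c in 𝓝[>] c₀, ∃ H : ι → ℝ, ∃ b ≤ f c, Tendsto H l (𝓝 b) ∧ F ≤ᶠ[l] H)
    (hlower : ∀ᶠ c in 𝓝[<] c₀, ∃ G : ι → ℝ, ∃ b ≥ f c, Tendsto G l (𝓝 b) ∧ G ≤ᶠ[l] F) :
    Tendsto F l (𝓝 (f c₀)) := by
  refine tendsto_order.2 ⟨fun a ha => ?_, fun a ha => ?_⟩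
  · obtain ⟨c, hc, G, b, hb, hG, hGF⟩ :=
      ((hf.eventually (lt_mem_nhds ha)).filter_mono nhdsWithin_le_nhds |>.and hlower).exists
    filter_upwards [hG.eventually (lt_mem_nhds (hc.trans_le hb)), hGF] with x h1 h2
    exact h1.trans_le h2
  · obtain ⟨c, hc, H, b, hb, hH, hFH⟩ :=
      ((hf.eventually (gt_mem_nhds ha)).filter_mono nhdsWithin_le_nhds |>.and hupper).exists
    filter_upwards [hH.eventually (gt_mem_nhds (hb.trans_lt hc)), hFH] with x h1 h2
    exact h2.trans_lt h1

theorem tendsto_div_of_tendsto_mul {𝕜 : Type*} [Field 𝕜] [TopologicalSpace 𝕜]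
    [ContinuousMul 𝕜] [ContinuousInv₀ 𝕜] {f g τ : ι → 𝕜} {a b : 𝕜}
    (hf : Tendsto (fun x => f x * τ x) l (𝓝 a)) (hg : Tendsto (fun x => g x * τ x) l (𝓝 b))
    (hb : b ≠ 0) (hτ : ∀ᶠ x in l, τ x ≠ 0) :
    Tendsto (fun x => f x / g x) l (𝓝 (a / b)) :=
  (hf.div hg hb).congr' (hτ.mono fun _ hx => mul_div_mul_right _ _ hx)

end Squeeze

section LinearlyBounded

/-- The test functions must vanish at `0` at least linearly: only `∑ₖ w k e^{-t s k}`, not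
`∑ₖ w k`, is assumed to converge. -/
def LinearlyBounded (h : ℝ → ℝ) : Prop :=
  ∃ M, ∀ x ∈ Ioc (0 : ℝ) 1, |h x| ≤ M * x

theorem linearlyBounded_id : LinearlyBounded id :=
  ⟨1, fun x hx => by rw [id, one_mul, abs_of_pos hx.1]⟩

theorem linearlyBounded_mul_of_continuous {g : ℝ → ℝ} (hg : Continuous g) :
    LinearlyBounded fun x => x * g x := by
  obtain ⟨M, hM⟩ := isCompact_Icc.exists_bound_of_continuousOn (hg.continuousOn (s := Icc 0 1))
  refine ⟨M, fun x hx => ?_⟩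
  rw [abs_mul, abs_of_pos hx.1, mul_comm]
  exact mul_le_mul_of_nonneg_right (hM x (Ioc_subset_Icc_self hx)) hx.1.le

theorem linearlyBounded_indicator_Ici {α : ℝ} (hα : 0 < α) :
    LinearlyBounded (indicator (Ici α) 1) := by
  refine ⟨α⁻¹, fun x hx => ?_⟩
  by_cases hxα : x ∈ Ici α
  · rw [indicator_of_mem hxα, Pi.one_apply, abs_one, ← div_eq_inv_mul, one_le_div hα]
    exact hxα
  · rw [indicator_of_notMem hxα, abs_zero]
    exact mul_nonneg (inv_nonneg.2 hα.le) hx.1.le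

noncomputable def ramp (α β x : ℝ) : ℝ := max 0 (min 1 ((x - α) / (β - α)))

variable {α β x : ℝ}

theorem continuous_ramp : Continuous (ramp α β) := by
  unfold ramp; fun_prop

theorem ramp_of_le (hαβ : α < β) (hx : x ≤ α) : ramp α β x = 0 :=
  max_eq_left <| (min_le_right _ _).trans <|
    div_nonpos_of_nonpos_of_nonneg (by linarith) (by linarith)

theorem indicator_Ici_le_ramp (hαβ : α < β) : indicator (Ici β) 1 x ≤ ramp α β x := by
  by_cases hx : x ∈ Ici β
  · rw [indicator_of_mem hx, Pi.one_apply, ramp, min_eq_left ((one_le_div (by linarith)).2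
      (by linarith [mem_Ici.1 hx]))]
    exact le_max_right _ _
  · rw [indicator_of_notMem hx]
    exact le_max_left _ _

theorem ramp_le_indicator_Ici (hαβ : α < β) : ramp α β x ≤ indicator (Ici α) 1 x := by
  by_cases hx : x ∈ Ici α
  · rw [indicator_of_mem hx, Pi.one_apply]
    exact max_le zero_le_one (min_le_left _ _)
  · rw [indicator_of_notMem hx, ramp_of_le hαβ (not_le.1 hx).le]

theorem continuous_ramp_div (hα : 0 < α) (hαβ : α < β) :
    Continuous fun x => ramp α β x / x := by
  refine continuous_iff_continuousAt.2 fun x => ?_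
  rcases ne_or_eq x 0 with hx | rfl
  · exact continuous_ramp.continuousAt.div continuousAt_id hx
  · refine continuousAt_const.congr (f := fun _ => (0 : ℝ)) ?_
    filter_upwards [gt_mem_nhds hα] with y hy
    rw [ramp_of_le hαβ hy.le, zero_div]

theorem mul_ramp_div (hα : 0 ≤ α) (hαβ : α < β) :
    (fun x => x * (ramp α β x / x)) = ramp α β := by
  funext x
  rcases ne_or_eq x 0 with hx | rfl
  · exact mul_div_cancel₀ _ hx
  · rw [zero_mul, ramp_of_le hαβ hα]

theorem linearlyBounded_ramp (hα : 0 < α) (hαβ : α < β) : LinearlyBounded (ramp α β) := by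
  simpa only [mul_ramp_div hα.le hαβ] using
    linearlyBounded_mul_of_continuous (continuous_ramp_div hα hαβ)

end LinearlyBounded

section HeatSum

variable {s v w : ℕ → ℝ} {ρ t : ℝ} {h : ℝ → ℝ}

/-- `heatSum s w ρ id t = t^ρ ∑ₖ w k e^{-t s k}` is the weighted heat trace, and
`heatSum s w ρ (indicator (Ici (exp (-1))) 1) t = t^ρ ∑_{t s k ≤ 1} w k` its truncated version. -/
noncomputable def heatSum (s w : ℕ → ℝ) (ρ : ℝ) (h : ℝ → ℝ) (t : ℝ) : ℝ :=
  (∑' k, w k * h (exp (-t * s k))) * t ^ ρ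

theorem exp_neg_mul_mem_Ioc {a b : ℝ} (ha : 0 ≤ a) (hb : 0 ≤ b) : exp (-a * b) ∈ Ioc (0 : ℝ) 1 :=
  ⟨exp_pos _, exp_le_one_iff.2 (by nlinarith)⟩

theorem summable_mul_comp_exp_neg_mul {W : ℕ → ℝ} (hs : ∀ k, 0 ≤ s k) (ht : 0 ≤ t)
    (hsum : Summable fun k => W k * exp (-t * s k)) (hv : ∀ k, |v k| ≤ W k)
    (hh : LinearlyBounded h) : Summable fun k => v k * h (exp (-t * s k)) := by
  obtain ⟨M, hM⟩ := hh
  refine (hsum.mul_left M).of_norm_bounded fun k => ?_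
  rw [Real.norm_eq_abs, abs_mul]
  calc |v k| * |h (exp (-t * s k))| ≤ W k * (M * exp (-t * s k)) :=
        mul_le_mul (hv k) (hM _ (exp_neg_mul_mem_Ioc ht (hs k))) (abs_nonneg _)
          ((abs_nonneg _).trans (hv k))
    _ = M * (W k * exp (-t * s k)) := by ring

theorem abs_heatSum_le {ε : ℝ} (hs : ∀ k, 0 ≤ s k) (hw : ∀ k, 0 ≤ w k) (ht : 0 ≤ t)
    (hsum : Summable fun k => w k * exp (-t * s k))
    (hh : ∀ x ∈ Ioc (0 : ℝ) 1, |h x| ≤ ε * x) :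
    |heatSum s w ρ h t| ≤ ε * heatSum s w ρ id t := by
  have hsum' : ‖∑' k, w k * h (exp (-t * s k))‖ ≤ ε * ∑' k, w k * exp (-t * s k) := by
    rw [← tsum_mul_left (f := fun k => w k * exp (-t * s k))]
    refine tsum_of_norm_bounded (hsum.mul_left ε).hasSum fun k => ?_
    rw [Real.norm_eq_abs, abs_mul, abs_of_nonneg (hw k)]
    calc w k * |h (exp (-t * s k))| ≤ w k * (ε * exp (-t * s k)) :=
          mul_le_mul_of_nonneg_left (hh _ (exp_neg_mul_mem_Ioc ht (hs k))) (hw k)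
      _ = ε * (w k * exp (-t * s k)) := by ring
  rw [heatSum, heatSum, abs_mul, abs_of_nonneg (rpow_nonneg ht ρ), ← mul_assoc, ← Real.norm_eq_abs]
  exact mul_le_mul_of_nonneg_right hsum' (rpow_nonneg ht ρ)

theorem heatSum_mono {h₁ h₂ : ℝ → ℝ} (hs : ∀ k, 0 ≤ s k) (hw : ∀ k, 0 ≤ w k) (ht : 0 ≤ t)
    (hsum : Summable fun k => w k * exp (-t * s k))
    (hh₁ : LinearlyBounded h₁) (hh₂ : LinearlyBounded h₂)
    (hle : ∀ x ∈ Ioc (0 : ℝ) 1, h₁ x ≤ h₂ x) :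
    heatSum s w ρ h₁ t ≤ heatSum s w ρ h₂ t := by
  have hw' : ∀ k, |w k| ≤ w k := fun k => (abs_of_nonneg (hw k)).le
  refine mul_le_mul_of_nonneg_right ?_ (rpow_nonneg ht ρ)
  exact (summable_mul_comp_exp_neg_mul hs ht hsum hw' hh₁).tsum_le_tsum
    (fun k => mul_le_mul_of_nonneg_left (hle _ (exp_neg_mul_mem_Ioc ht (hs k))) (hw k))
    (summable_mul_comp_exp_neg_mul hs ht hsum hw' hh₂)

theorem heatSum_sub {W : ℕ → ℝ} {h₁ h₂ : ℝ → ℝ} (hs : ∀ k, 0 ≤ s k) (ht : 0 ≤ t)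
    (hsum : Summable fun k => W k * exp (-t * s k)) (hv : ∀ k, |v k| ≤ W k)
    (hh₁ : LinearlyBounded h₁) (hh₂ : LinearlyBounded h₂) :
    heatSum s v ρ (fun x => h₁ x - h₂ x) t = heatSum s v ρ h₁ t - heatSum s v ρ h₂ t := by
  simp only [heatSum, mul_sub]
  rw [(summable_mul_comp_exp_neg_mul hs ht hsum hv hh₁).tsum_sub
    (summable_mul_comp_exp_neg_mul hs ht hsum hv hh₂), sub_mul]

theorem heatSum_sum {W : ℕ → ℝ} {ι : Type*} {S : Finset ι} {a : ι → ℝ} {f : ι → ℝ → ℝ}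
    (hs : ∀ k, 0 ≤ s k) (ht : 0 ≤ t)
    (hsum : Summable fun k => W k * exp (-t * s k)) (hv : ∀ k, |v k| ≤ W k)
    (hf : ∀ i ∈ S, LinearlyBounded (f i)) :
    heatSum s v ρ (fun x => ∑ i ∈ S, a i * f i x) t = ∑ i ∈ S, a i * heatSum s v ρ (f i) t := by
  simp only [heatSum, Finset.mul_sum]
  rw [Summable.tsum_finsetSum (f := fun i k => v k * (a i * f i (exp (-t * s k)))) fun i hi =>
    ((summable_mul_comp_exp_neg_mul hs ht hsum hv (hf i hi)).mul_left (a i)).congr fun k => by ring,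
    Finset.sum_mul]
  refine Finset.sum_congr rfl fun i _ => ?_
  rw [← mul_assoc, ← tsum_mul_left]
  congr 2
  exact funext fun k => by ring

theorem heatSum_add_const {h : ℝ → ℝ} {K : ℝ} (hv : Summable fun k => v k * h (exp (-t * s k)))
    (h1 : Summable fun k => h (exp (-t * s k))) :
    heatSum s (fun k => v k + K) ρ h t = heatSum s v ρ h t + K * heatSum s (fun _ => 1) ρ h t := by
  simp only [heatSum, add_mul, one_mul]
  rw [hv.tsum_add (h1.mul_left K), tsum_mul_left]
  ring

theorem heatSum_pow_succ (ht : 0 < t) (n : ℕ) :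
    heatSum s w ρ (· ^ (n + 1)) t = heatSum s w ρ id ((n + 1) * t) * (1 / (n + 1)) ^ ρ := by
  have hexp : ∀ k, exp (-t * s k) ^ (n + 1) = exp (-((n + 1) * t) * s k) := fun k => by
    rw [← exp_nat_mul]; push_cast; ring_nf
  simp only [heatSum, id, hexp, mul_assoc]
  rw [← mul_rpow (by positivity) (by positivity)]
  field_simp

theorem tendsto_heatSum_pow_succ {A : ℝ}
    (hA : Tendsto (heatSum s w ρ id) (𝓝[>] 0) (𝓝 A)) (n : ℕ) :
    Tendsto (heatSum s w ρ (· ^ (n + 1))) (𝓝[>] 0) (𝓝 (A * (1 / (n + 1)) ^ ρ)) := by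
  have hscale : Tendsto (fun t : ℝ => (n + 1) * t) (𝓝[>] 0) (𝓝[>] 0) :=
    tendsto_comap.mono_left (comap_mulLeft_nhdsGT_zero (by positivity)).ge
  refine ((hA.comp hscale).mul_const _).congr' ?_
  filter_upwards [self_mem_nhdsWithin] with t ht
  exact (heatSum_pow_succ ht n).symm

end HeatSum

section GammaIntegral

variable {ρ : ℝ} {h : ℝ → ℝ}

noncomputable def gammaIntegral (ρ : ℝ) (h : ℝ → ℝ) : ℝ :=
  ∫ u in Ioi 0, h (exp (-u)) * u ^ (ρ - 1)

theorem abs_gammaIntegrand_le {M u : ℝ} (hh : ∀ x ∈ Ioc (0 : ℝ) 1, |h x| ≤ M * x) (hu : 0 < u) :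
    |h (exp (-u)) * u ^ (ρ - 1)| ≤ M * (exp (-u) * u ^ (ρ - 1)) := by
  have hu' : 0 ≤ u ^ (ρ - 1) := rpow_nonneg hu.le _
  rw [abs_mul, abs_of_nonneg hu', ← mul_assoc]
  exact mul_le_mul_of_nonneg_right (hh _ (by simpa using exp_neg_mul_mem_Ioc zero_le_one hu.le)) hu'

theorem integrableOn_gammaIntegrand (hρ : 0 < ρ) (hm : Measurable h) (hh : LinearlyBounded h) :
    IntegrableOn (fun u => h (exp (-u)) * u ^ (ρ - 1)) (Ioi 0) := by
  obtain ⟨M, hM⟩ := hh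
  refine ((GammaIntegral_convergent hρ).const_mul M).mono' ?_ ?_
  · exact ((hm.comp (by fun_prop)).mul (by fun_prop)).aestronglyMeasurable
  · exact (ae_restrict_iff' measurableSet_Ioi).2 <| ae_of_all _ fun u hu =>
      (Real.norm_eq_abs _).trans_le (abs_gammaIntegrand_le hM hu)

theorem abs_gammaIntegral_le {ε : ℝ} (hρ : 0 < ρ) (hh : ∀ x ∈ Ioc (0 : ℝ) 1, |h x| ≤ ε * x) :
    |gammaIntegral ρ h| ≤ ε * Gamma ρ := by
  rw [Gamma_eq_integral hρ, ← integral_const_mul, ← Real.norm_eq_abs]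
  refine norm_integral_le_of_norm_le ((GammaIntegral_convergent hρ).const_mul ε) ?_
  exact (ae_restrict_iff' measurableSet_Ioi).2 <| ae_of_all _ fun u hu =>
    (Real.norm_eq_abs _).trans_le (abs_gammaIntegrand_le hh hu)

theorem gammaIntegral_mono {h₁ h₂ : ℝ → ℝ} (hρ : 0 < ρ) (hm₁ : Measurable h₁)
    (hm₂ : Measurable h₂) (hh₁ : LinearlyBounded h₁) (hh₂ : LinearlyBounded h₂)
    (hle : ∀ x ∈ Ioc (0 : ℝ) 1, h₁ x ≤ h₂ x) :
    gammaIntegral ρ h₁ ≤ gammaIntegral ρ h₂ := by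
  refine setIntegral_mono_on (integrableOn_gammaIntegrand hρ hm₁ hh₁)
    (integrableOn_gammaIntegrand hρ hm₂ hh₂) measurableSet_Ioi fun u hu => ?_
  exact mul_le_mul_of_nonneg_right
    (hle _ (by simpa using exp_neg_mul_mem_Ioc zero_le_one (le_of_lt hu)))
    (rpow_nonneg (le_of_lt hu) _)

theorem gammaIntegral_sub {h₁ h₂ : ℝ → ℝ} (hρ : 0 < ρ) (hm₁ : Measurable h₁)
    (hm₂ : Measurable h₂) (hh₁ : LinearlyBounded h₁) (hh₂ : LinearlyBounded h₂) :
    gammaIntegral ρ (fun x => h₁ x - h₂ x) = gammaIntegral ρ h₁ - gammaIntegral ρ h₂ := by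
  simp only [gammaIntegral, sub_mul]
  exact integral_sub (integrableOn_gammaIntegrand hρ hm₁ hh₁)
    (integrableOn_gammaIntegrand hρ hm₂ hh₂)

theorem gammaIntegral_sum {ι : Type*} {S : Finset ι} {a : ι → ℝ} {f : ι → ℝ → ℝ} (hρ : 0 < ρ)
    (hm : ∀ i ∈ S, Measurable (f i)) (hf : ∀ i ∈ S, LinearlyBounded (f i)) :
    gammaIntegral ρ (fun x => ∑ i ∈ S, a i * f i x) = ∑ i ∈ S, a i * gammaIntegral ρ (f i) := by
  simp only [gammaIntegral, Finset.sum_mul, mul_assoc, ← integral_const_mul]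
  exact integral_finsetSum S fun i hi =>
    (integrableOn_gammaIntegrand hρ (hm i hi) (hf i hi)).const_mul (a i)

theorem gammaIntegral_pow_succ (hρ : 0 < ρ) (n : ℕ) :
    gammaIntegral ρ (· ^ (n + 1)) = (1 / (n + 1)) ^ ρ * Gamma ρ := by
  rw [← integral_rpow_mul_exp_neg_mul_Ioi hρ (by positivity)]
  refine setIntegral_congr_fun measurableSet_Ioi fun u _ => ?_
  dsimp only
  rw [mul_comm, ← exp_nat_mul]
  push_cast
  ring_nf

theorem gammaIntegral_indicator_Ici (hρ : 0 < ρ) {c : ℝ} (hc : 0 < c) :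
    gammaIntegral ρ (indicator (Ici (exp (-c))) 1) = c ^ ρ / ρ := by
  have hind : ∀ u, indicator (Ici (exp (-c))) 1 (exp (-u)) * u ^ (ρ - 1)
      = indicator (Iic c) (fun u => u ^ (ρ - 1)) u := fun u => by
    by_cases hu : u ∈ Iic c
    · rw [indicator_of_mem (Set.mem_Ici.2 (exp_le_exp.2 (neg_le_neg hu))), indicator_of_mem hu,
        Pi.one_apply, one_mul]
    · rw [indicator_of_notMem (fun h => hu (by simpa using Set.mem_Ici.1 h)),
        indicator_of_notMem hu, zero_mul]
  rw [gammaIntegral, funext hind, setIntegral_indicator measurableSet_Iic, Ioi_inter_Iic,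
    ← intervalIntegral.integral_of_le hc.le, integral_rpow (Or.inl (by linarith)),
    sub_add_cancel, zero_rpow hρ.ne', sub_zero]

end GammaIntegral

section Karamata

variable {s w : ℕ → ℝ} {ρ A : ℝ}

theorem tendsto_heatSum_polynomial (hρ : 0 < ρ) (hs : ∀ k, 0 ≤ s k) (hw : ∀ k, 0 ≤ w k)
    (hsum : ∀ t > 0, Summable fun k => w k * exp (-t * s k))
    (hA : Tendsto (heatSum s w ρ id) (𝓝[>] 0) (𝓝 A)) (p : Polynomial ℝ) :
    Tendsto (heatSum s w ρ fun x => x * p.eval x) (𝓝[>] 0)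
      (𝓝 (A / Gamma ρ * gammaIntegral ρ fun x => x * p.eval x)) := by
  have hp : (fun x => x * p.eval x)
      = fun x => ∑ n ∈ range (p.natDegree + 1), p.coeff n * x ^ (n + 1) := funext fun x => by
    rw [Polynomial.eval_eq_sum_range, Finset.mul_sum]
    exact Finset.sum_congr rfl fun n _ => by ring
  have hpow : ∀ n ∈ range (p.natDegree + 1), LinearlyBounded (· ^ (n + 1)) := fun n _ => by
    simpa [pow_succ'] using linearlyBounded_mul_of_continuous (continuous_pow n)
  have hlim : ∀ n : ℕ, p.coeff n * (A * (1 / (n + 1)) ^ ρ)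
      = A / Gamma ρ * (p.coeff n * gammaIntegral ρ (· ^ (n + 1))) := fun n => by
    rw [gammaIntegral_pow_succ hρ]
    field_simp [(Gamma_pos_of_pos hρ).ne']
  rw [hp, gammaIntegral_sum hρ (fun n _ => by fun_prop) hpow, Finset.mul_sum]
  simp only [← hlim]
  refine (tendsto_finsetSum _ fun n _ =>
    (tendsto_heatSum_pow_succ hA n).const_mul (p.coeff n)).congr' ?_
  filter_upwards [self_mem_nhdsWithin] with t ht
  exact (heatSum_sum hs (le_of_lt ht) (hsum t ht) (fun k => (abs_of_nonneg (hw k)).le) hpow).symm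

theorem tendsto_heatSum_of_continuous (hρ : 0 < ρ) (hs : ∀ k, 0 ≤ s k) (hw : ∀ k, 0 ≤ w k)
    (hsum : ∀ t > 0, Summable fun k => w k * exp (-t * s k))
    (hA : Tendsto (heatSum s w ρ id) (𝓝[>] 0) (𝓝 A)) {g : ℝ → ℝ} (hg : Continuous g) :
    Tendsto (heatSum s w ρ fun x => x * g x) (𝓝[>] 0)
      (𝓝 (A / Gamma ρ * gammaIntegral ρ fun x => x * g x)) := by
  refine tendsto_of_forall_approx fun ε hε => ?_
  set δ := ε / (|A| + 1)
  have hδ : 0 < δ := by positivity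
  have hδε : δ * (|A| + 1) = ε := div_mul_cancel₀ _ (by positivity)
  obtain ⟨p, hp⟩ := exists_polynomial_near_of_continuousOn 0 1 g hg.continuousOn δ hδ
  have hgp : ∀ x ∈ Ioc (0 : ℝ) 1, |x * g x - x * p.eval x| ≤ δ * x := fun x hx => by
    rw [← mul_sub, abs_mul, abs_of_pos hx.1, abs_sub_comm, mul_comm]
    exact mul_le_mul_of_nonneg_right (hp x (Ioc_subset_Icc_self hx)).le hx.1.le
  have hbg := linearlyBounded_mul_of_continuous hg
  have hbp := linearlyBounded_mul_of_continuous p.continuous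
  refine ⟨_, _, tendsto_heatSum_polynomial hρ hs hw hsum hA p, ?_, ?_⟩
  · filter_upwards [self_mem_nhdsWithin, hA.eventually (gt_mem_nhds
      (show A < |A| + 1 by linarith [le_abs_self A]))] with t ht htA
    rw [← heatSum_sub hs (le_of_lt ht) (hsum t ht) (fun k => (abs_of_nonneg (hw k)).le) hbg hbp]
    calc _ ≤ δ * heatSum s w ρ id t := abs_heatSum_le hs hw (le_of_lt ht) (hsum t ht) hgp
      _ ≤ ε := hδε ▸ by gcongr
  · rw [← mul_sub, ← gammaIntegral_sub hρ (by fun_prop) (by fun_prop) hbg hbp, abs_mul,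
      abs_div, abs_of_pos (Gamma_pos_of_pos hρ)]
    calc |A| / Gamma ρ * |gammaIntegral ρ fun x => x * g x - x * p.eval x|
        ≤ |A| / Gamma ρ * (δ * Gamma ρ) := by gcongr; exact abs_gammaIntegral_le hρ hgp
      _ = |A| * δ := by field_simp [(Gamma_pos_of_pos hρ).ne']
      _ ≤ ε := by nlinarith

theorem tendsto_heatSum_ramp (hρ : 0 < ρ) (hs : ∀ k, 0 ≤ s k) (hw : ∀ k, 0 ≤ w k)
    (hsum : ∀ t > 0, Summable fun k => w k * exp (-t * s k))
    (hA : Tendsto (heatSum s w ρ id) (𝓝[>] 0) (𝓝 A)) {α β : ℝ} (hα : 0 < α) (hαβ : α < β) :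
    Tendsto (heatSum s w ρ (ramp α β)) (𝓝[>] 0) (𝓝 (A / Gamma ρ * gammaIntegral ρ (ramp α β))) := by
  have := tendsto_heatSum_of_continuous hρ hs hw hsum hA (continuous_ramp_div hα hαβ)
  rwa [mul_ramp_div hα.le hαβ] at this

theorem tendsto_heatSum_indicator_Ici (hρ : 0 < ρ) (hs : ∀ k, 0 ≤ s k) (hw : ∀ k, 0 ≤ w k)
    (hsum : ∀ t > 0, Summable fun k => w k * exp (-t * s k))
    (hA : Tendsto (heatSum s w ρ id) (𝓝[>] 0) (𝓝 A)) :
    Tendsto (heatSum s w ρ (indicator (Ici (exp (-1))) 1)) (𝓝[>] 0)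
      (𝓝 (A / Gamma (ρ + 1))) := by
  have hA0 : 0 ≤ A := ge_of_tendsto hA <| eventually_nhdsWithin_of_forall fun t ht =>
    mul_nonneg (tsum_nonneg fun k => mul_nonneg (hw k) (exp_pos _).le) (rpow_nonneg (le_of_lt ht) ρ)
  have hlim : ∀ c > 0, A / Gamma ρ * gammaIntegral ρ (indicator (Ici (exp (-c))) 1)
      = A * c ^ ρ / Gamma (ρ + 1) := fun c hc => by
    rw [gammaIntegral_indicator_Ici hρ hc, Gamma_add_one hρ.ne']
    field_simp
  have hmχ : ∀ c : ℝ, Measurable (indicator (Ici (exp (-c))) (1 : ℝ → ℝ)) := fun c =>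
    measurable_const.indicator measurableSet_Ici
  have hbχ : ∀ c, LinearlyBounded (indicator (Ici (exp (-c))) 1) := fun c =>
    linearlyBounded_indicator_Ici (exp_pos _)
  rw [show A / Gamma (ρ + 1) = A * 1 ^ ρ / Gamma (ρ + 1) by rw [one_rpow, mul_one]]
  refine tendsto_of_continuousAt_of_squeeze (f := fun c => A * c ^ ρ / Gamma (ρ + 1))
    (((continuousAt_id.rpow_const (Or.inl one_ne_zero)).const_mul A).div_const _) ?_ ?_
  · filter_upwards [self_mem_nhdsWithin] with c (hc : 1 < c)
    have hαβ : exp (-c) < exp (-1) := exp_lt_exp.2 (by linarith)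
    refine ⟨_, _, ?_, tendsto_heatSum_ramp hρ hs hw hsum hA (exp_pos _) hαβ, ?_⟩
    · rw [← hlim c (by linarith)]
      refine mul_le_mul_of_nonneg_left ?_ (by positivity)
      exact gammaIntegral_mono hρ continuous_ramp.measurable (hmχ c)
        (linearlyBounded_ramp (exp_pos _) hαβ) (hbχ c) fun x _ => ramp_le_indicator_Ici hαβ
    · filter_upwards [self_mem_nhdsWithin] with t ht
      exact heatSum_mono hs hw (le_of_lt ht) (hsum t ht) (hbχ 1)
        (linearlyBounded_ramp (exp_pos _) hαβ) fun x _ => indicator_Ici_le_ramp hαβ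
  · filter_upwards [Ioo_mem_nhdsLT zero_lt_one] with c hc
    have hαβ : exp (-1) < exp (-c) := exp_lt_exp.2 (by linarith [hc.2])
    refine ⟨_, _, ?_, tendsto_heatSum_ramp hρ hs hw hsum hA (exp_pos _) hαβ, ?_⟩
    · rw [← hlim c hc.1]
      refine mul_le_mul_of_nonneg_left ?_ (by positivity)
      exact gammaIntegral_mono hρ (hmχ c) continuous_ramp.measurable
        (hbχ c) (linearlyBounded_ramp (exp_pos _) hαβ) fun x _ => indicator_Ici_le_ramp hαβ
    · filter_upwards [self_mem_nhdsWithin] with t ht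
      exact heatSum_mono hs hw (le_of_lt ht) (hsum t ht)
        (linearlyBounded_ramp (exp_pos _) hαβ) (hbχ 1) fun x _ => ramp_le_indicator_Ici hαβ

end Karamata

section BoundedWeights

variable {s v : ℕ → ℝ} {ρ : ℝ}

theorem summable_of_tendsto_heatSum {w : ℕ → ℝ} {C : ℝ} (hs : ∀ k, 0 ≤ s k) (hw : ∀ k, 0 ≤ w k)
    (hC : C ≠ 0) (h : Tendsto (heatSum s w ρ id) (𝓝[>] 0) (𝓝 C)) (t : ℝ) (ht : 0 < t) :
    Summable fun k => w k * exp (-t * s k) := by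
  by_contra hns
  have hzero : ∀ τ ∈ Ioc 0 t, heatSum s w ρ id τ = 0 := fun τ hτ => by
    have : ¬Summable fun k => w k * exp (-τ * s k) := fun hτs => hns <|
      hτs.of_nonneg_of_le (fun k => mul_nonneg (hw k) (exp_pos _).le)
        fun k => mul_le_mul_of_nonneg_left (exp_le_exp.2 (by nlinarith [hs k, hτ.2])) (hw k)
    simp only [heatSum, id, tsum_eq_zero_of_not_summable this, zero_mul]
  exact hC <| tendsto_nhds_unique h <| tendsto_const_nhds.congr' <|
    eventually_of_mem (Ioc_mem_nhdsGT ht) fun τ hτ => (hzero τ hτ).symm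

theorem tendsto_heatSum_indicator_Ici_of_abs_le {K B C : ℝ} (hρ : 0 < ρ) (hs : ∀ k, 0 ≤ s k)
    (hsum : ∀ t > 0, Summable fun k => exp (-t * s k)) (hv : ∀ k, |v k| ≤ K)
    (hC : Tendsto (heatSum s (fun _ => 1) ρ id) (𝓝[>] 0) (𝓝 C))
    (hB : Tendsto (heatSum s v ρ id) (𝓝[>] 0) (𝓝 B)) :
    Tendsto (heatSum s v ρ (indicator (Ici (exp (-1))) 1)) (𝓝[>] 0)
      (𝓝 (B / Gamma (ρ + 1))) := by
  have hsum1 : ∀ t > 0, Summable fun k => (fun _ => (1 : ℝ)) k * exp (-t * s k) := by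
    simpa using hsum
  have hsumv : ∀ t > 0, ∀ {h : ℝ → ℝ}, LinearlyBounded h →
      Summable fun k => v k * h (exp (-t * s k)) := fun t ht _ hh =>
    summable_mul_comp_exp_neg_mul (W := fun _ => K) hs ht.le ((hsum t ht).mul_left K) hv hh
  have hsumh : ∀ t > 0, ∀ {h : ℝ → ℝ}, LinearlyBounded h →
      Summable fun k => h (exp (-t * s k)) := fun t ht _ hh => by
    simpa using
      summable_mul_comp_exp_neg_mul (v := fun _ => 1) hs ht.le (hsum1 t ht) (fun _ => by simp) hh
  have hsplit : ∀ {h : ℝ → ℝ}, LinearlyBounded h → ∀ t > 0, heatSum s (fun k => v k + K) ρ h t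
      = heatSum s v ρ h t + K * heatSum s (fun _ => 1) ρ h t := fun hh t ht =>
    heatSum_add_const (hsumv t ht hh) (hsumh t ht hh)
  have hw : ∀ k, 0 ≤ v k + K := fun k => by linarith [neg_abs_le (v k), hv k]
  have hsumw : ∀ t > 0, Summable fun k => (v k + K) * exp (-t * s k) := fun t ht =>
    ((hsumv t ht linearlyBounded_id).add ((hsum t ht).mul_left K)).congr fun k => by
      simp only [id]; ring
  have hwA : Tendsto (heatSum s (fun k => v k + K) ρ id) (𝓝[>] 0) (𝓝 (B + K * C)) :=
    (hB.add (hC.const_mul K)).congr' <| eventually_nhdsWithin_of_forall fun t ht =>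
      (hsplit linearlyBounded_id t ht).symm
  have hlim : B / Gamma (ρ + 1) = (B + K * C) / Gamma (ρ + 1) - K * (C / Gamma (ρ + 1)) := by
    ring
  rw [hlim]
  refine ((tendsto_heatSum_indicator_Ici hρ hs hw hsumw hwA).sub
    ((tendsto_heatSum_indicator_Ici hρ hs (fun _ => zero_le_one) hsum1 hC).const_mul K)).congr' ?_
  filter_upwards [self_mem_nhdsWithin] with t ht
  rw [hsplit (linearlyBounded_indicator_Ici (exp_pos _)) t ht, add_sub_cancel_right]

theorem tendsto_heatSum_of_clm {c : ℕ → ℂ} {a : ℂ} (L : ℂ →L[ℝ] ℝ)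
    (hsum : ∀ t > 0, Summable fun k => c k * (exp (-t * s k) : ℂ))
    (h : Tendsto (fun t : ℝ => (∑' k, c k * exp (-t * s k)) * ((t ^ ρ : ℝ) : ℂ)) (𝓝[>] 0) (𝓝 a)) :
    Tendsto (heatSum s (fun k => L (c k)) ρ id) (𝓝[>] 0) (𝓝 (L a)) := by
  refine ((L.continuous.tendsto a).comp h).congr' <| eventually_nhdsWithin_of_forall fun t ht => ?_
  have hsmul : ∀ (r : ℝ) (z : ℂ), L (z * r) = L z * r := fun r z => by
    rw [mul_comm, ← Complex.real_smul, L.map_smul, smul_eq_mul, mul_comm]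
  simp only [Function.comp, heatSum, id, hsmul, L.map_tsum (hsum t ht)]

end BoundedWeights

section Spectral

variable {lam : ℕ → ℝ} {N : ℝ → ℕ} {ρ : ℝ}

theorem tsum_mul_indicator_eq_sum_range (hpos : ∀ k, 0 ≤ lam k)
    (hN : ∀ (x : ℝ) (k : ℕ), lam k ≤ x ↔ k < N x) {x : ℝ} (hx : 0 < x) (v : ℕ → ℝ) :
    ∑' k, v k * indicator (Ici (exp (-1))) 1 (exp (-(x ^ 2)⁻¹ * lam k ^ 2))
      = ∑ k ∈ range (N x), v k := by
  have hmem : ∀ k, exp (-(x ^ 2)⁻¹ * lam k ^ 2) ∈ Ici (exp (-1)) ↔ k < N x := fun k => by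
    rw [Set.mem_Ici, exp_le_exp, ← hN, neg_mul, neg_le_neg_iff, inv_mul_le_iff₀ (by positivity),
      mul_one, pow_le_pow_iff_left₀ (hpos k) hx.le two_ne_zero]
  rw [tsum_eq_sum (s := range (N x)) fun k hk => by
    rw [indicator_of_notMem (fun h => hk (mem_range.2 ((hmem k).1 h))), mul_zero]]
  exact Finset.sum_congr rfl fun k hk => by
    rw [indicator_of_mem ((hmem k).2 (mem_range.1 hk)), Pi.one_apply, mul_one]

theorem tendsto_sum_range_mul_rpow {v : ℕ → ℝ} {K B C : ℝ} (hρ : 0 < ρ)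
    (hpos : ∀ k, 0 ≤ lam k) (hN : ∀ (x : ℝ) (k : ℕ), lam k ≤ x ↔ k < N x)
    (hsum : ∀ t > 0, Summable fun k => exp (-t * lam k ^ 2)) (hv : ∀ k, |v k| ≤ K)
    (hC : Tendsto (heatSum (fun k => lam k ^ 2) (fun _ => 1) ρ id) (𝓝[>] 0) (𝓝 C))
    (hB : Tendsto (heatSum (fun k => lam k ^ 2) v ρ id) (𝓝[>] 0) (𝓝 B)) :
    Tendsto (fun x => (∑ k ∈ range (N x), v k) * ((x ^ 2)⁻¹) ^ ρ) atTop
      (𝓝 (B / Gamma (ρ + 1))) := by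
  have hτ : Tendsto (fun x : ℝ => (x ^ 2)⁻¹) atTop (𝓝[>] 0) :=
    tendsto_inv_atTop_nhdsGT_zero.comp (tendsto_pow_atTop two_ne_zero)
  refine ((tendsto_heatSum_indicator_Ici_of_abs_le hρ (fun k => sq_nonneg _) hsum hv hC hB).comp
    hτ).congr' ?_
  filter_upwards [eventually_gt_atTop 0] with x hx
  simp only [Function.comp, heatSum]
  rw [tsum_mul_indicator_eq_sum_range hpos hN hx]

theorem tendsto_sum_range_mul_rpow_complex {c : ℕ → ℂ} {K C : ℝ} {a : ℂ} (hρ : 0 < ρ)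
    (hpos : ∀ k, 0 ≤ lam k) (hN : ∀ (x : ℝ) (k : ℕ), lam k ≤ x ↔ k < N x)
    (hsum : ∀ t > 0, Summable fun k => exp (-t * lam k ^ 2)) (hc : ∀ k, ‖c k‖ ≤ K)
    (hC : Tendsto (heatSum (fun k => lam k ^ 2) (fun _ => 1) ρ id) (𝓝[>] 0) (𝓝 C))
    (ha : Tendsto (fun t : ℝ => (∑' k, c k * exp (-t * lam k ^ 2)) * ((t ^ ρ : ℝ) : ℂ))
      (𝓝[>] 0) (𝓝 a)) :
    Tendsto (fun x => (∑ k ∈ range (N x), c k) * ((((x ^ 2)⁻¹) ^ ρ : ℝ) : ℂ)) atTop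
      (𝓝 (a / (Gamma (ρ + 1) : ℂ))) := by
  have hsumc : ∀ t > 0, Summable fun k => c k * (exp (-t * lam k ^ 2) : ℂ) := fun t ht =>
    ((hsum t ht).mul_left K).of_norm_bounded fun k => by
      rw [norm_mul, Complex.norm_real, Real.norm_of_nonneg (exp_pos _).le]
      exact mul_le_mul_of_nonneg_right (hc k) (exp_pos _).le
  have hre := tendsto_sum_range_mul_rpow hρ hpos hN hsum
    (fun k => (Complex.abs_re_le_norm _).trans (hc k)) hC
    (tendsto_heatSum_of_clm Complex.reCLM hsumc ha)
  have him := tendsto_sum_range_mul_rpow hρ hpos hN hsum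
    (fun k => (Complex.abs_im_le_norm _).trans (hc k)) hC
    (tendsto_heatSum_of_clm Complex.imCLM hsumc ha)
  convert ((Complex.continuous_ofReal.tendsto _).comp hre).add
    (((Complex.continuous_ofReal.tendsto _).comp him).mul_const Complex.I) using 1
  · funext x
    apply Complex.ext <;> simp [Complex.re_sum, Complex.im_sum]
  · congr 1
    apply Complex.ext <;> simp

end Spectral

/-- `D` is encoded by the absolute values `lam k = |λ_k(D)|` of its eigenvalues, listed with
multiplicity along an orthonormal eigenbasis `(e_k)`, and `a` by its diagonal coefficients
`c k = ⟨e_k, a e_k⟩`. Then `Tr(e^{-tD²}) = ∑ₖ e^{-t·lam k²}`,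
`Tr(a e^{-tD²}) = ∑ₖ c k e^{-t·lam k²}`, `Tr(P_λ) = N λ` and `Tr(P_λ a P_λ) = ∑_{k < N λ} c k`, where `N λ = #{k : lam k ≤ λ}`. -/
theorem truncated_average_tendsto_of_heat_asymptotics_general
    (d C : ℝ) (hd : 0 < d) (hC : 0 < C) (Ca : ℂ)
    (lam : ℕ → ℝ) (hpos : ∀ k, 0 ≤ lam k)
    (c : ℕ → ℂ) (hc : ∃ K : ℝ, ∀ k, ‖c k‖ ≤ K)
    (N : ℝ → ℕ) (hN : ∀ (x : ℝ) (k : ℕ), lam k ≤ x ↔ k < N x)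
    (hheat : Tendsto (fun t : ℝ => (∑' k, Real.exp (-t * lam k ^ 2)) * Real.rpow t (d / 2))
      (nhdsWithin 0 (Set.Ioi 0)) (nhds C))
    (hheatA : Tendsto
      (fun t : ℝ => (∑' k, c k * Real.exp (-t * lam k ^ 2)) * (Real.rpow t (d / 2) : ℂ))
      (nhdsWithin 0 (Set.Ioi 0)) (nhds Ca)) :
    Tendsto (fun x : ℝ => (∑ k ∈ range (N x), c k) / (N x : ℂ)) atTop
      (nhds (Ca / (C : ℂ))) := by
  obtain ⟨K, hK⟩ := hc
  have hρ : 0 < d / 2 := by positivity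
  have hΓ : 0 < Gamma (d / 2 + 1) := Gamma_pos_of_pos (by positivity)
  have hheat' : Tendsto (heatSum (fun k => lam k ^ 2) (fun _ => 1) (d / 2) id) (𝓝[>] 0) (𝓝 C) :=
    hheat.congr fun t => by simp only [heatSum, id, one_mul]; rfl
  have hsum : ∀ t > 0, Summable fun k => exp (-t * lam k ^ 2) := fun t ht => by
    simpa using summable_of_tendsto_heatSum (fun k => sq_nonneg (lam k)) (fun _ => zero_le_one)
      hC.ne' hheat' t ht
  have hnum := tendsto_sum_range_mul_rpow_complex hρ hpos hN hsum hK hheat' hheatA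
  have hden := tendsto_sum_range_mul_rpow (v := fun _ => 1) (K := 1) hρ hpos hN hsum
    (fun _ => by simp) hheat' hheat'
  have hlim : Ca / (Gamma (d / 2 + 1) : ℂ) / ((C / Gamma (d / 2 + 1) : ℝ) : ℂ) = Ca / C := by
    rw [Complex.ofReal_div, div_div_div_cancel_right₀ (Complex.ofReal_ne_zero.2 hΓ.ne')]
  rw [← hlim]
  refine tendsto_div_of_tendsto_mul hnum ?_ (by exact_mod_cast (div_pos hC hΓ).ne') <|
    eventually_gt_atTop 0 |>.mono fun x hx => Complex.ofReal_ne_zero.2 (by positivity)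
  exact ((Complex.continuous_ofReal.tendsto _).comp hden).congr fun x => by simp

/-- Proposition `HeattoInt`. The operator `D` (self-adjoint, compact resolvent)
is encoded through a nondecreasing sequence `lam k = |λ_k(D)|` of absolute values of its
eigenvalues (tending to `∞`), listed with multiplicity, together with an orthonormal eigenbasis
`(e_k)`; `c k = ⟨e_k, a e_k⟩` are the diagonal matrix coefficients of the bounded operator `a`,
so that `Tr(e^{-tD²}) = ∑ₖ e^{-t·lam k²}`, `Tr(a e^{-tD²}) = ∑ₖ c k · e^{-t·lam k²}`,
`Tr(P_λ) = N λ` and `Tr(P_λ a P_λ) = ∑_{k < N λ} c k`, where `N λ = #{k : lam k ≤ λ}`.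
If `Tr(e^{-tD²})·t^{d/2} → C > 0` and `Tr(a e^{-tD²})·t^{d/2} → Ca` as `t → 0⁺`, then
`Tr(P_λ a P_λ)/Tr(P_λ) → Ca/C` as `λ → ∞`. -/
theorem truncated_average_tendsto_of_heat_asymptotics
    (d C : ℝ) (hd : 0 < d) (hC : 0 < C) (Ca : ℂ)
    (lam : ℕ → ℝ) (hmono : Monotone lam) (hpos : ∀ k, 0 ≤ lam k)
    (htop : Tendsto lam atTop atTop)
    (c : ℕ → ℂ) (hc : ∃ K : ℝ, ∀ k, ‖c k‖ ≤ K)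
    (N : ℝ → ℕ) (hN : ∀ (x : ℝ) (k : ℕ), lam k ≤ x ↔ k < N x)
    (hheat : Tendsto (fun t : ℝ => (∑' k, Real.exp (-t * lam k ^ 2)) * Real.rpow t (d / 2))
      (nhdsWithin 0 (Set.Ioi 0)) (nhds C))
    (hheatA : Tendsto
      (fun t : ℝ => (∑' k, c k * Real.exp (-t * lam k ^ 2)) * (Real.rpow t (d / 2) : ℂ))
      (nhdsWithin 0 (Set.Ioi 0)) (nhds Ca)) :
    Tendsto (fun x : ℝ => (∑ k ∈ range (N x), c k) / (N x : ℂ)) atTop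
      (nhds (Ca / (C : ℂ))) :=
  truncated_average_tendsto_of_heat_asymptotics_general d C hd hC Ca lam hpos c hc N hN hheat hheatA
end

section
/- Let D be self-adjoint with compact resolvent on a Hilbert space H such that the eigenvalue counting function N(λ) = Tr(χ_{[−λ,λ]}(D)) satisfies N(λ+N) − N(λ) = o(N(λ)) as λ → ∞ for every fixed N > 0. Let B ∈ B(H) map dom|D| into itself with [|D|, B] bounded. Then ‖P_λ B (1−P_λ)‖_{HS}² / Tr(P_λ) → 0 as λ → ∞, where P_λ = χ_{[−λ,λ]}(D) and ‖·‖_{HS} is the Hilbert–Schmidt norm. -/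
open Filter ENNReal

open scoped InnerProductSpace NNReal

section WidomAux
variable {H : Type*} [NormedAddCommGroup H] [InnerProductSpace ℂ H] [CompleteSpace H]
set_option linter.unusedSectionVars false
set_option linter.unusedVariables false

lemma bessel_ennreal (e : HilbertBasis ℕ ℂ H) (v : H) :
    ∑' k : ℕ, ((‖⟪e k, v⟫_ℂ‖₊ : ℝ≥0∞)) ^ 2 ≤ ((‖v‖₊ : ℝ≥0∞)) ^ 2 := by
  rw [ENNReal.tsum_eq_iSup_sum]
  refine iSup_le fun s => ?_
  have h := e.orthonormal.sum_inner_products_le (s := s) v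
  calc ∑ k ∈ s, ((‖⟪e k, v⟫_ℂ‖₊ : ℝ≥0∞)) ^ 2
      = ((∑ k ∈ s, ‖⟪e k, v⟫_ℂ‖₊ ^ 2 : ℝ≥0) : ℝ≥0∞) := by push_cast; ring
    _ ≤ ((‖v‖₊ ^ 2 : ℝ≥0) : ℝ≥0∞) := by
        rw [ENNReal.coe_le_coe, ← NNReal.coe_le_coe]
        push_cast
        simpa using h
    _ = _ := by push_cast; ring

lemma adjoint_row_bound (e : HilbertBasis ℕ ℂ H) (A : H →L[ℂ] H) (j : ℕ) :
    ∑' k : ℕ, ((‖⟪e j, A (e k)⟫_ℂ‖₊ : ℝ≥0∞)) ^ 2 ≤ ((‖A‖₊ : ℝ≥0∞)) ^ 2 := by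
  have h1 : ∀ k : ℕ, ‖⟪e j, A (e k)⟫_ℂ‖₊ = ‖⟪e k, (ContinuousLinearMap.adjoint A) (e j)⟫_ℂ‖₊ := by
    intro k
    rw [← ContinuousLinearMap.adjoint_inner_left]
    simp [nnnorm, norm_inner_symm]
  calc ∑' k : ℕ, ((‖⟪e j, A (e k)⟫_ℂ‖₊ : ℝ≥0∞)) ^ 2
      = ∑' k : ℕ, ((‖⟪e k, (ContinuousLinearMap.adjoint A) (e j)⟫_ℂ‖₊ : ℝ≥0∞)) ^ 2 := by
        simp_rw [h1]
    _ ≤ ((‖(ContinuousLinearMap.adjoint A) (e j)‖₊ : ℝ≥0∞)) ^ 2 := bessel_ennreal e _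
    _ ≤ ((‖A‖₊ : ℝ≥0∞)) ^ 2 := by
        have : ‖(ContinuousLinearMap.adjoint A) (e j)‖₊ ≤ ‖A‖₊ := by
          have h2 : ‖e j‖₊ = 1 := by ext; exact e.orthonormal.1 j
          have h3 : ‖ContinuousLinearMap.adjoint A‖₊ = ‖A‖₊ := by
            ext; exact LinearIsometryEquiv.norm_map ContinuousLinearMap.adjoint A
          calc ‖(ContinuousLinearMap.adjoint A) (e j)‖₊
              ≤ ‖ContinuousLinearMap.adjoint A‖₊ * ‖e j‖₊ :=
                (ContinuousLinearMap.adjoint A).le_opNNNorm (e j)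
            _ = ‖A‖₊ := by rw [h2, h3, mul_one]
        exact pow_le_pow_left' (by exact_mod_cast this) 2

lemma widom_key_bound (e : HilbertBasis ℕ ℂ H) (μ : ℕ → ℝ)
    (hfin : ∀ x : ℝ, {k : ℕ | μ k ≤ x}.Finite)
    (cnt : ℝ → ℕ) (hcnt : ∀ x : ℝ, cnt x = (hfin x).toFinset.card)
    (B Bc : H →L[ℂ] H)
    (hcomm : ∀ j k : ℕ, ⟪e j, Bc (e k)⟫_ℂ = ((μ j : ℂ) - (μ k : ℂ)) * ⟪e j, B (e k)⟫_ℂ)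
    (x N : ℝ) (hN : 0 < N) :
    (∑' p : {j : ℕ // μ j ≤ x} × {k : ℕ // x < μ k},
        ((‖⟪e (p.1 : ℕ), B (e (p.2 : ℕ))⟫_ℂ‖₊ : ℝ≥0∞) ^ 2))
      ≤ ((cnt (x + N) - cnt x : ℕ) : ℝ≥0∞) * ((‖B‖₊ : ℝ≥0∞)) ^ 2
        + ((cnt x : ℕ) : ℝ≥0∞) * (((‖Bc‖₊ : ℝ≥0∞)) ^ 2 / ((N.toNNReal : ℝ≥0∞)) ^ 2) := by
  classical
  set ν : ℝ≥0 := N.toNNReal with hνdef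
  have hνN : (ν : ℝ) = N := Real.coe_toNNReal _ hN.le
  have hν0 : (ν : ℝ≥0∞) ≠ 0 := by
    simp only [ne_eq, ENNReal.coe_eq_zero]
    intro h; rw [h] at hνN; simp at hνN; linarith
  have hν_top : (ν : ℝ≥0∞) ≠ ∞ := ENNReal.coe_ne_top
  set q : ℕ → ℕ → ℝ≥0∞ := fun j k => ((‖⟪e j, B (e k)⟫_ℂ‖₊ : ℝ≥0∞)) ^ 2 with hq
  set r : ℕ → ℕ → ℝ≥0∞ := fun j k => ((‖⟪e j, Bc (e k)⟫_ℂ‖₊ : ℝ≥0∞)) ^ 2 with hr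
  -- pointwise commutator estimate
  have hpoint : ∀ j k : ℕ, μ j ≤ x → x + N < μ k → q j k ≤ r j k / (ν : ℝ≥0∞) ^ 2 := by
    intro j k hj hk
    rw [ENNReal.le_div_iff_mul_le (Or.inl (pow_ne_zero 2 hν0)) (Or.inl (by
      exact ENNReal.pow_ne_top hν_top))]
    have hreal : ‖⟪e j, B (e k)⟫_ℂ‖ * N ≤ ‖⟪e j, Bc (e k)⟫_ℂ‖ := by
      have h1 : ‖⟪e j, Bc (e k)⟫_ℂ‖ = |μ j - μ k| * ‖⟪e j, B (e k)⟫_ℂ‖ := by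
        rw [hcomm j k, norm_mul]
        congr 1
        have : ((μ j : ℂ) - (μ k : ℂ)) = ((μ j - μ k : ℝ) : ℂ) := by push_cast; ring
        rw [this, Complex.norm_real, Real.norm_eq_abs]
      have h2 : N ≤ |μ j - μ k| := by
        have : N ≤ μ k - μ j := by linarith
        calc N ≤ μ k - μ j := this
          _ = -(μ j - μ k) := by ring
          _ ≤ |μ j - μ k| := neg_le_abs _
      rw [h1]
      calc ‖⟪e j, B (e k)⟫_ℂ‖ * N ≤ ‖⟪e j, B (e k)⟫_ℂ‖ * |μ j - μ k| := by
            exact mul_le_mul_of_nonneg_left h2 (norm_nonneg _)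
        _ = |μ j - μ k| * ‖⟪e j, B (e k)⟫_ℂ‖ := mul_comm _ _
    have hnn : ‖⟪e j, B (e k)⟫_ℂ‖₊ * ν ≤ ‖⟪e j, Bc (e k)⟫_ℂ‖₊ := by
      rw [← NNReal.coe_le_coe]
      push_cast
      rw [hνN]
      exact hreal
    calc q j k * (ν : ℝ≥0∞) ^ 2
        = ((‖⟪e j, B (e k)⟫_ℂ‖₊ * ν : ℝ≥0) : ℝ≥0∞) ^ 2 := by
          rw [hq]; push_cast; ring
      _ ≤ ((‖⟪e j, Bc (e k)⟫_ℂ‖₊ : ℝ≥0)  : ℝ≥0∞) ^ 2 := by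
          exact pow_le_pow_left' (by exact_mod_cast hnn) 2
      _ = r j k := rfl
  -- column (Bessel) bound for B
  have hcol : ∀ k : ℕ, ∑' j : ℕ, q j k ≤ ((‖B‖₊ : ℝ≥0∞)) ^ 2 := by
    intro k
    calc ∑' j : ℕ, q j k ≤ ((‖B (e k)‖₊ : ℝ≥0∞)) ^ 2 := bessel_ennreal e _
      _ ≤ ((‖B‖₊ : ℝ≥0∞)) ^ 2 := by
          gcongr
          have h2 : ‖e k‖₊ = 1 := by ext; exact e.orthonormal.1 k
          have := B.le_opNNNorm (e k)
          rw [h2, mul_one] at this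
          exact_mod_cast this
  -- row bound for Bc
  have hrow : ∀ j : ℕ, ∑' k : ℕ, r j k ≤ ((‖Bc‖₊ : ℝ≥0∞)) ^ 2 := fun j =>
    adjoint_row_bound e Bc j
  -- the two index sets
  set S1 : Set ℕ := {j : ℕ | μ j ≤ x} with hS1
  set S2 : Set ℕ := {k : ℕ | x < μ k} with hS2
  set nB : ℝ≥0∞ := ((‖B‖₊ : ℝ≥0∞)) ^ 2 with hnB
  set nBc : ℝ≥0∞ := ((‖Bc‖₊ : ℝ≥0∞)) ^ 2 / (ν : ℝ≥0∞) ^ 2 with hnBc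
  have key : (∑' p : S1 × S2, q (p.1 : ℕ) (p.2 : ℕ))
      ≤ (∑' k : S2, (if μ (k : ℕ) ≤ x + N then nB else 0))
        + (∑' j : S1, nBc) := by
    calc (∑' p : S1 × S2, q (p.1 : ℕ) (p.2 : ℕ))
        = ∑' (j : S1) (k : S2), q (j : ℕ) (k : ℕ) := ENNReal.tsum_prod'
      _ ≤ ∑' (j : S1) (k : S2),
            ((if μ (k : ℕ) ≤ x + N then q (j : ℕ) (k : ℕ) else 0)
              + (if x + N < μ (k : ℕ) then r (j : ℕ) (k : ℕ) / (ν : ℝ≥0∞) ^ 2 else 0)) := by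
          refine ENNReal.tsum_le_tsum fun j => ENNReal.tsum_le_tsum fun k => ?_
          by_cases h : μ (k : ℕ) ≤ x + N
          · simp [h, not_lt.mpr h]
          · push_neg at h
            simp only [not_le.mpr h, if_neg, if_pos h, zero_add, h, if_true]
            simpa [not_le.mpr h, h] using hpoint (j : ℕ) (k : ℕ) j.2 h
      _ = (∑' (j : S1) (k : S2), (if μ (k : ℕ) ≤ x + N then q (j : ℕ) (k : ℕ) else 0))
          + ∑' (j : S1) (k : S2), (if x + N < μ (k : ℕ) then r (j : ℕ) (k : ℕ) / (ν : ℝ≥0∞) ^ 2 else 0) := by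
          simp_rw [ENNReal.tsum_add]
      _ ≤ (∑' k : S2, (if μ (k : ℕ) ≤ x + N then nB else 0)) + (∑' j : S1, nBc) := by
          gcongr with j
          · -- first term: swap and use Bessel
            rw [ENNReal.tsum_comm]
            refine ENNReal.tsum_le_tsum fun k => ?_
            by_cases h : μ (k : ℕ) ≤ x + N
            · simp only [h, if_true]
              calc ∑' j : S1, q (j : ℕ) (k : ℕ)
                  ≤ ∑' j : ℕ, q j (k : ℕ) :=
                    ENNReal.tsum_comp_le_tsum_of_injective Subtype.val_injective _
                _ ≤ nB := hcol _
            · simp [h]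
          · -- second term: drop the condition, Bessel for Bc
            calc ∑' k : S2, (if x + N < μ (k : ℕ) then r (j : ℕ) (k : ℕ) / (ν : ℝ≥0∞) ^ 2 else 0)
                ≤ ∑' k : S2, r (j : ℕ) (k : ℕ) / (ν : ℝ≥0∞) ^ 2 := by
                  refine ENNReal.tsum_le_tsum fun k => ?_
                  split <;> simp
              _ ≤ ∑' k : ℕ, r (j : ℕ) k / (ν : ℝ≥0∞) ^ 2 :=
                  ENNReal.tsum_comp_le_tsum_of_injective Subtype.val_injective _
              _ = (∑' k : ℕ, r (j : ℕ) k) / (ν : ℝ≥0∞) ^ 2 := by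
                  simp_rw [div_eq_mul_inv, ENNReal.tsum_mul_right]
              _ ≤ nBc := ENNReal.div_le_div_right (hrow _) _
  -- count the two constant sums
  have hsum1 : (∑' k : S2, (if μ (k : ℕ) ≤ x + N then nB else 0))
      ≤ ((cnt (x + N) - cnt x : ℕ) : ℝ≥0∞) * nB := by
    set Tfin : Finset ℕ := (hfin (x + N)).toFinset \ (hfin x).toFinset with hT
    have hcard : Tfin.card = cnt (x + N) - cnt x := by
      rw [hT, Finset.card_sdiff_of_subset, hcnt, hcnt]
      intro k hk
      simp only [Set.Finite.mem_toFinset, Set.mem_setOf_eq] at hk ⊢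
      linarith
    calc (∑' k : S2, (if μ (k : ℕ) ≤ x + N then nB else 0))
        = ∑' k : S2, (if x < μ (k : ℕ) ∧ μ (k : ℕ) ≤ x + N then nB else 0) := by
          refine tsum_congr fun k => ?_
          have := k.2
          simp only [hS2, Set.mem_setOf_eq] at this
          simp [this]
      _ ≤ ∑' k : ℕ, (if x < μ k ∧ μ k ≤ x + N then nB else 0) :=
          ENNReal.tsum_comp_le_tsum_of_injective Subtype.val_injective _
      _ = ∑ k ∈ Tfin, (if x < μ k ∧ μ k ≤ x + N then nB else 0) := by
          refine tsum_eq_sum fun k hk => ?_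
          rw [hT] at hk
          simp only [Finset.mem_sdiff, Set.Finite.mem_toFinset, Set.mem_setOf_eq, not_and,
            not_not] at hk
          by_cases h1 : μ k ≤ x + N
          · have := hk h1
            simp [not_lt.mpr this]
          · simp [h1]
      _ ≤ ∑ k ∈ Tfin, nB := by
          refine Finset.sum_le_sum fun k _ => ?_
          split <;> simp
      _ = (Tfin.card : ℝ≥0∞) * nB := by
          rw [Finset.sum_const, nsmul_eq_mul]
      _ = ((cnt (x + N) - cnt x : ℕ) : ℝ≥0∞) * nB := by rw [hcard]
  have hsum2 : (∑' j : S1, nBc) = ((cnt x : ℕ) : ℝ≥0∞) * nBc := by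
    rw [tsum_subtype S1 (fun _ => nBc)]
    rw [tsum_eq_sum (s := (hfin x).toFinset) (fun j hj => by
      rw [Set.indicator_of_notMem]
      simpa [hS1] using hj)]
    have : ∀ j ∈ (hfin x).toFinset, S1.indicator (fun _ => nBc) j = nBc := by
      intro j hj
      rw [Set.indicator_of_mem]
      simpa [hS1] using hj
    rw [Finset.sum_congr rfl this, Finset.sum_const, nsmul_eq_mul, hcnt]
  calc (∑' p : S1 × S2, q (p.1 : ℕ) (p.2 : ℕ))
      ≤ (∑' k : S2, (if μ (k : ℕ) ≤ x + N then nB else 0)) + (∑' j : S1, nBc) := key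
    _ ≤ ((cnt (x + N) - cnt x : ℕ) : ℝ≥0∞) * nB + ((cnt x : ℕ) : ℝ≥0∞) * nBc := by
        rw [hsum2]; gcongr

theorem widom_hs_norm_tendsto_zero'
    (e : HilbertBasis ℕ ℂ H) (μ : ℕ → ℝ) (hμ : ∀ k, 0 ≤ μ k)
    (hfin : ∀ x : ℝ, {k : ℕ | μ k ≤ x}.Finite)
    (htop : Tendsto μ atTop atTop)
    (cnt : ℝ → ℕ) (hcnt : ∀ x : ℝ, cnt x = (hfin x).toFinset.card)
    (hcnt_o : ∀ N : ℝ, 0 < N →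
      Tendsto (fun x : ℝ => ((cnt (x + N) : ℝ) - (cnt x : ℝ)) / (cnt x : ℝ))
        atTop (nhds 0))
    (B Bc : H →L[ℂ] H)
    (hcomm : ∀ j k : ℕ, ⟪e j, Bc (e k)⟫_ℂ = ((μ j : ℂ) - (μ k : ℂ)) * ⟪e j, B (e k)⟫_ℂ) :
    Tendsto (fun x : ℝ =>
        (∑' p : {j : ℕ // μ j ≤ x} × {k : ℕ // x < μ k},
            ((‖⟪e (p.1 : ℕ), B (e (p.2 : ℕ))⟫_ℂ‖₊ : ℝ≥0∞) ^ 2)).toReal / (cnt x : ℝ))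
      atTop (nhds 0) := by
  rw [Metric.tendsto_nhds]
  intro ε hε
  -- choose N large
  set N : ℝ := Real.sqrt (2 * (‖Bc‖ ^ 2 + 1) / ε) with hNdef
  have hargpos : 0 < 2 * (‖Bc‖ ^ 2 + 1) / ε := by positivity
  have hNpos : 0 < N := Real.sqrt_pos.mpr hargpos
  have hN2 : N ^ 2 = 2 * (‖Bc‖ ^ 2 + 1) / ε := Real.sq_sqrt hargpos.le
  have hterm2 : ‖Bc‖ ^ 2 / N ^ 2 < ε / 2 := by
    rw [hN2, div_div_eq_mul_div, div_lt_div_iff₀ (by positivity) two_pos]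
    nlinarith [norm_nonneg Bc, sq_nonneg (‖Bc‖), hε]
  set δ : ℝ := ε / (2 * (‖B‖ ^ 2 + 1)) with hδdef
  have hδpos : 0 < δ := by positivity
  have h1 := (Metric.tendsto_nhds.mp (hcnt_o N hNpos)) δ hδpos
  have h2 : ∀ᶠ x : ℝ in atTop, μ 0 ≤ x := eventually_ge_atTop (μ 0)
  filter_upwards [h1, h2] with x hx1 hx2
  -- cnt x ≥ 1
  have hmem : (0 : ℕ) ∈ (hfin x).toFinset := by
    simp only [Set.Finite.mem_toFinset, Set.mem_setOf_eq]; exact hx2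
  have hcpos : 0 < (cnt x : ℝ) := by
    have : 0 < cnt x := by
      rw [hcnt]; exact Finset.card_pos.mpr ⟨0, hmem⟩
    exact_mod_cast this
  have hmono : cnt x ≤ cnt (x + N) := by
    rw [hcnt, hcnt]
    apply Finset.card_le_card
    intro k hk
    simp only [Set.Finite.mem_toFinset, Set.mem_setOf_eq] at hk ⊢
    linarith
  -- the key bound, in real form
  have key := widom_key_bound e μ hfin cnt hcnt B Bc hcomm x N hNpos
  set T : ℝ≥0∞ := (∑' p : {j : ℕ // μ j ≤ x} × {k : ℕ // x < μ k},
      ((‖⟪e (p.1 : ℕ), B (e (p.2 : ℕ))⟫_ℂ‖₊ : ℝ≥0∞) ^ 2)) with hT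
  set RHS : ℝ≥0∞ := ((cnt (x + N) - cnt x : ℕ) : ℝ≥0∞) * ((‖B‖₊ : ℝ≥0∞)) ^ 2
      + ((cnt x : ℕ) : ℝ≥0∞) * (((‖Bc‖₊ : ℝ≥0∞)) ^ 2 / ((N.toNNReal : ℝ≥0∞)) ^ 2) with hRHS
  have hνN : ((N.toNNReal : ℝ≥0) : ℝ) = N := Real.coe_toNNReal _ hNpos.le
  have hν0 : ((N.toNNReal : ℝ≥0∞)) ^ 2 ≠ 0 := by
    apply pow_ne_zero
    simp only [ne_eq, ENNReal.coe_eq_zero]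
    intro h; rw [h] at hνN; simp at hνN; linarith
  have hRfin : RHS ≠ ∞ := by
    rw [hRHS]
    apply ENNReal.add_ne_top.mpr
    refine ⟨ENNReal.mul_ne_top (ENNReal.natCast_ne_top _)
      (ENNReal.pow_ne_top ENNReal.coe_ne_top), ENNReal.mul_ne_top (ENNReal.natCast_ne_top _) ?_⟩
    exact (ENNReal.div_lt_top (ENNReal.pow_ne_top ENNReal.coe_ne_top) hν0).ne
  have hreal : T.toReal ≤ ((cnt (x + N) - cnt x : ℕ) : ℝ) * ‖B‖ ^ 2
      + (cnt x : ℝ) * (‖Bc‖ ^ 2 / N ^ 2) := by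
    have h := ENNReal.toReal_mono hRfin key
    rw [hRHS] at h
    rw [ENNReal.toReal_add (ENNReal.mul_ne_top (ENNReal.natCast_ne_top _)
      (ENNReal.pow_ne_top ENNReal.coe_ne_top)) (ENNReal.mul_ne_top (ENNReal.natCast_ne_top _)
      ((ENNReal.div_lt_top (ENNReal.pow_ne_top ENNReal.coe_ne_top) hν0).ne)),
      ENNReal.toReal_mul, ENNReal.toReal_mul, ENNReal.toReal_div, ENNReal.toReal_pow,
      ENNReal.toReal_pow, ENNReal.toReal_pow, ENNReal.coe_toReal, ENNReal.coe_toReal,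
      ENNReal.coe_toReal, ENNReal.toReal_natCast, ENNReal.toReal_natCast, hνN,
      coe_nnnorm, coe_nnnorm] at h
    exact h
  -- now the real estimate
  have hdiff : ((cnt (x + N) - cnt x : ℕ) : ℝ) = (cnt (x + N) : ℝ) - (cnt x : ℝ) := by
    rw [Nat.cast_sub hmono]
  have hratio_lt : ((cnt (x + N) : ℝ) - (cnt x : ℝ)) / (cnt x : ℝ) < δ := by
    have := hx1
    rw [Real.dist_eq, sub_zero] at this
    exact lt_of_abs_lt this
  have hratio_nonneg : 0 ≤ ((cnt (x + N) : ℝ) - (cnt x : ℝ)) / (cnt x : ℝ) := by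
    apply div_nonneg _ hcpos.le
    have : (cnt x : ℝ) ≤ (cnt (x + N) : ℝ) := by exact_mod_cast hmono
    linarith
  have hgle : T.toReal / (cnt x : ℝ)
      ≤ ‖B‖ ^ 2 * (((cnt (x + N) : ℝ) - (cnt x : ℝ)) / (cnt x : ℝ)) + ‖Bc‖ ^ 2 / N ^ 2 := by
    rw [div_le_iff₀ hcpos]
    calc T.toReal ≤ ((cnt (x + N) - cnt x : ℕ) : ℝ) * ‖B‖ ^ 2
        + (cnt x : ℝ) * (‖Bc‖ ^ 2 / N ^ 2) := hreal
      _ = (‖B‖ ^ 2 * (((cnt (x + N) : ℝ) - (cnt x : ℝ)) / (cnt x : ℝ)) + ‖Bc‖ ^ 2 / N ^ 2)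
          * (cnt x : ℝ) := by
          rw [hdiff]; field_simp
  have hterm1 : ‖B‖ ^ 2 * (((cnt (x + N) : ℝ) - (cnt x : ℝ)) / (cnt x : ℝ)) < ε / 2 := by
    calc ‖B‖ ^ 2 * (((cnt (x + N) : ℝ) - (cnt x : ℝ)) / (cnt x : ℝ))
        ≤ (‖B‖ ^ 2 + 1) * (((cnt (x + N) : ℝ) - (cnt x : ℝ)) / (cnt x : ℝ)) := by
          apply mul_le_mul_of_nonneg_right _ hratio_nonneg
          linarith
      _ < (‖B‖ ^ 2 + 1) * δ := by
          apply mul_lt_mul_of_pos_left hratio_lt (by positivity)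
      _ = ε / 2 := by
          rw [hδdef]; field_simp
  have hgnonneg : 0 ≤ T.toReal / (cnt x : ℝ) := div_nonneg ENNReal.toReal_nonneg hcpos.le
  rw [Real.dist_eq, sub_zero, abs_of_nonneg hgnonneg]
  calc T.toReal / (cnt x : ℝ)
      ≤ ‖B‖ ^ 2 * (((cnt (x + N) : ℝ) - (cnt x : ℝ)) / (cnt x : ℝ)) + ‖Bc‖ ^ 2 / N ^ 2 := hgle
    _ < ε / 2 + ε / 2 := add_lt_add hterm1 hterm2
    _ = ε := by ring

end WidomAux

/-- Widom's lemma. `|D|` is encoded by a Hilbert basis `e` of eigenvectors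
with nonnegative eigenvalues `μ k` tending to `∞` (compact resolvent), so that
`P_λ = χ_{[−λ,λ]}(D)` projects onto `span{e_k : μ k ≤ λ}` and
`Tr(P_λ) = N(λ) = #{k : μ k ≤ λ} = cnt λ`.  `B` is bounded, maps `dom|D|` into itself, and
`Bc` is the bounded extension of `[|D|,B]`: `⟨e_j, Bc e_k⟩ = (μ_j − μ_k)⟨e_j, B e_k⟩`.
Assuming `N(λ+N) − N(λ) = o(N(λ))` as `λ → ∞` for every fixed `N > 0`, the normalised squared
Hilbert–Schmidt norm `‖P_λ B (1−P_λ)‖_HS² / Tr(P_λ)` tends to `0`. -/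
theorem widom_hs_norm_tendsto_zero
    {H : Type*} [NormedAddCommGroup H] [InnerProductSpace ℂ H] [CompleteSpace H]
    (e : HilbertBasis ℕ ℂ H) (μ : ℕ → ℝ) (hμ : ∀ k, 0 ≤ μ k)
    (hfin : ∀ x : ℝ, {k : ℕ | μ k ≤ x}.Finite)
    (htop : Tendsto μ atTop atTop)
    (cnt : ℝ → ℕ) (hcnt : ∀ x : ℝ, cnt x = (hfin x).toFinset.card)
    (hcnt_o : ∀ N : ℝ, 0 < N →
      Tendsto (fun x : ℝ => ((cnt (x + N) : ℝ) - (cnt x : ℝ)) / (cnt x : ℝ))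
        atTop (nhds 0))
    (B Bc : H →L[ℂ] H)
    (hcomm : ∀ j k : ℕ, ⟪e j, Bc (e k)⟫_ℂ = ((μ j : ℂ) - (μ k : ℂ)) * ⟪e j, B (e k)⟫_ℂ) :
    Tendsto (fun x : ℝ =>
        (∑' p : {j : ℕ // μ j ≤ x} × {k : ℕ // x < μ k},
            ((‖⟪e (p.1 : ℕ), B (e (p.2 : ℕ))⟫_ℂ‖₊ : ℝ≥0∞) ^ 2)).toReal / (cnt x : ℝ))
      atTop (nhds 0) := by
  exact widom_hs_norm_tendsto_zero' e μ hμ hfin htop cnt hcnt hcnt_o B Bc hcomm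
end

section
/- Let D be self-adjoint with compact resolvent, P_λ = χ_{[−λ,λ]}(D), B ∈ B(H) mapping dom|D| into itself with [|D|,B] bounded, and N > 0. Then ‖P_λ B (1 − P_{λ+N})‖_{HS} ≤ N^{−1} ‖P_λ [|D|, B] (1 − P_{λ+N})‖_{HS}. -/
open ENNReal

open scoped InnerProductSpace

theorem coe_nnnorm_sq_le_ofReal_inv_sq_mul {𝕜 : Type*} [NormedDivisionRing 𝕜] {N : ℝ} (hN : 0 < N)
    {c : 𝕜} (hc : N ≤ ‖c‖) (z : 𝕜) :
    (‖z‖₊ : ℝ≥0∞) ^ 2 ≤ ENNReal.ofReal (N⁻¹ ^ 2) * (‖c * z‖₊ : ℝ≥0∞) ^ 2 := by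
  have hz : ‖z‖ ≤ N⁻¹ * ‖c * z‖ := by
    rw [norm_mul, ← mul_assoc]
    exact le_mul_of_one_le_left (norm_nonneg z) ((one_le_inv_mul₀ hN).2 hc)
  have hz' : (‖z‖₊ : ℝ≥0∞) ≤ ENNReal.ofReal N⁻¹ * ‖c * z‖₊ := by
    rw [← enorm_eq_nnnorm, ← ofReal_norm, ← enorm_eq_nnnorm, ← ofReal_norm,
      ← ENNReal.ofReal_mul (inv_nonneg.2 hN.le)]
    exact ENNReal.ofReal_le_ofReal hz
  rw [ENNReal.ofReal_pow (inv_nonneg.2 hN.le), ← mul_pow]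
  exact pow_le_pow_left₀ bot_le hz' 2

/-- `|D|` is encoded by a Hilbert basis `e` of eigenvectors, `|D| e_k = μ_k e_k`, and `Bc` stands
for the bounded extension of `[|D|, B]` through its matrix coefficients; the two sums are the
squared Hilbert–Schmidt norms of `P_λ B (1 − P_{λ+N})` and `P_λ Bc (1 − P_{λ+N})`. -/
theorem hilbertSchmidt_sq_le_gap_commutator_general
    {H : Type*} [NormedAddCommGroup H] [InnerProductSpace ℂ H]
    (e : HilbertBasis ℕ ℂ H) (μ : ℕ → ℝ)
    (B Bc : H →L[ℂ] H)
    (hcomm : ∀ j k : ℕ, ⟪e j, Bc (e k)⟫_ℂ = ((μ j : ℂ) - (μ k : ℂ)) * ⟪e j, B (e k)⟫_ℂ)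
    (lam N : ℝ) (hN : 0 < N) :
    (∑' p : {j : ℕ // μ j ≤ lam} × {k : ℕ // lam + N < μ k},
        ((‖⟪e (p.1 : ℕ), B (e (p.2 : ℕ))⟫_ℂ‖₊ : ℝ≥0∞) ^ 2))
      ≤ ENNReal.ofReal (N⁻¹ ^ 2) *
        ∑' p : {j : ℕ // μ j ≤ lam} × {k : ℕ // lam + N < μ k},
          ((‖⟪e (p.1 : ℕ), Bc (e (p.2 : ℕ))⟫_ℂ‖₊ : ℝ≥0∞) ^ 2) := by
  rw [← ENNReal.tsum_mul_left]
  refine ENNReal.tsum_le_tsum fun ⟨⟨j, hj⟩, ⟨k, hk⟩⟩ => ?_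
  have hgap : N ≤ ‖(μ j : ℂ) - μ k‖ := by
    rw [← Complex.ofReal_sub, Complex.norm_real, Real.norm_eq_abs, abs_sub_comm]
    exact le_abs.2 (Or.inl (by linarith))
  simpa only [hcomm] using coe_nnnorm_sq_le_ofReal_inv_sq_mul hN hgap ⟪e j, B (e k)⟫_ℂ

/-- Widom's spectral-gap estimate. The operator `|D|` is encoded by a
Hilbert basis `e` of eigenvectors with nonnegative eigenvalues `μ k` (so `|D| e_k = μ_k e_k`),
`B` is a bounded operator mapping `dom|D|` into itself, and `Bc` is the bounded extension of
the commutator `[|D|, B]`, which on matrix coefficients means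
`⟨e_j, Bc e_k⟩ = (μ_j − μ_k)⟨e_j, B e_k⟩`.  The squared Hilbert–Schmidt norms
`‖P_λ B (1 − P_{λ+N})‖_HS² = ∑_{μ_j ≤ λ, μ_k > λ+N} |⟨e_j, B e_k⟩|²` (and similarly for `Bc`)
satisfy `‖P_λ B (1 − P_{λ+N})‖_HS² ≤ N⁻² ‖P_λ [|D|,B] (1 − P_{λ+N})‖_HS²`. -/
theorem hilbertSchmidt_sq_le_gap_commutator
    {H : Type*} [NormedAddCommGroup H] [InnerProductSpace ℂ H] [CompleteSpace H]
    (e : HilbertBasis ℕ ℂ H) (μ : ℕ → ℝ) (hμ : ∀ k, 0 ≤ μ k)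
    (B Bc : H →L[ℂ] H)
    (hcomm : ∀ j k : ℕ, ⟪e j, Bc (e k)⟫_ℂ = ((μ j : ℂ) - (μ k : ℂ)) * ⟪e j, B (e k)⟫_ℂ)
    (lam N : ℝ) (hN : 0 < N) :
    (∑' p : {j : ℕ // μ j ≤ lam} × {k : ℕ // lam + N < μ k},
        ((‖⟪e (p.1 : ℕ), B (e (p.2 : ℕ))⟫_ℂ‖₊ : ℝ≥0∞) ^ 2))
      ≤ ENNReal.ofReal (N⁻¹ ^ 2) *
        ∑' p : {j : ℕ // μ j ≤ lam} × {k : ℕ // lam + N < μ k},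
          ((‖⟪e (p.1 : ℕ), Bc (e (p.2 : ℕ))⟫_ℂ‖₊ : ℝ≥0∞) ^ 2) :=
  hilbertSchmidt_sq_le_gap_commutator_general e μ B Bc hcomm lam N hN
end

section
/- Let ω be an extended limit on ℓ∞ (a positive linear functional with ω(1)=1 vanishing on sequences tending to 0), let (r_k) be a strictly increasing unbounded sequence of nonnegative reals with multiplicities m_k ≥ 1, set Z(t) = ∑_k m_k e^{−t r_k}, and suppose Z(t) < ∞ for t > β and Z(t) → ∞ as t ↓ β. Then the functional ω̂ on ℓ∞ defined by ω̂(b) = ω( Z(β+1/n)^{−1} ∑_{k=0}^∞ (M_k b_{n_k} − M_{k−1} b_{n_{k−1}}) e^{−(β+1/n) r_k} ), where M_k = ∑_{j≤k} m_j and n_k = M_k − 1, is an extended limit: it is positive, normalized, and vanishes on sequences converging to 0. -/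
open Filter Finset

/-- `M k = ∑_{j ≤ k} m j`, the cumulative multiplicity. -/
def cumMult (m : ℕ → ℕ) (k : ℕ) : ℕ := ∑ j ∈ range (k + 1), m j

/-- The partition function `Z(t) = ∑ₖ m_k e^{−t r_k}`. -/
noncomputable def partitionZ (r : ℕ → ℝ) (m : ℕ → ℕ) (t : ℝ) : ℝ :=
  ∑' k, (m k : ℝ) * Real.exp (-t * r k)

/-- The transferred functional `ω̂` of the Fröhlich-functional construction:
`ω̂(b) = ω( Z(β+1/n)⁻¹ ∑ₖ (M_k b_{M_k−1} − M_{k−1} b_{M_{k−1}−1}) e^{−(β+1/n) r_k} )`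
(the index `n` is shifted to `n+1` so that the defining sequence is everywhere defined). -/
noncomputable def frohlichTransfer (ω : (ℕ → ℝ) →ₗ[ℝ] ℝ) (r : ℕ → ℝ) (m : ℕ → ℕ)
    (β : ℝ) (b : ℕ → ℝ) : ℝ :=
  ω (fun n : ℕ =>
    (partitionZ r m (β + 1 / (n + 1)))⁻¹ *
      ∑' k : ℕ,
        ((cumMult m k : ℝ) * b (cumMult m k - 1)
          - (if k = 0 then 0 else (cumMult m (k - 1) : ℝ) * b (cumMult m (k - 1) - 1)))
        * Real.exp (-(β + 1 / (n + 1)) * r k))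

/-!
Write `E_k = e^{-t r_k}` and `A_k = M_k b_{M_k - 1}`. Abel summation turns
`∑ₖ (A_k - A_{k-1}) E_k` into `∑ₖ A_k (E_k - E_{k+1})` plus a boundary term `A_N E_N`; since
`E` is nonnegative and decreasing, all weights are nonnegative, so the heat-type average is
monotone in `A`. Comparing with `A_k = M_k`, whose backward differences are the `m_k`, gives the
value `Z(t)`, hence normalisation and positivity. If `b → 0` then `|A_k| ≤ K N₀ + ε M_k`, so the
average at `t` is at most `K N₀ / Z(t) + ε`, and the first term disappears because
`Z(t) → ∞` as `t ↓ β`.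
-/

open Topology

def backDiff {R : Type*} [CommRing R] : (ℕ → R) →ₗ[R] ℕ → R where
  toFun A k := A k - if k = 0 then 0 else A (k - 1)
  map_add' A B := by
    ext k
    simp only [Pi.add_apply]
    split_ifs <;> ring
  map_smul' c A := by
    ext k
    simp only [Pi.smul_apply, smul_eq_mul, RingHom.id_apply]
    split_ifs <;> ring

section BackDiff

variable {R : Type*} [CommRing R]

theorem backDiff_apply (A : ℕ → R) (k : ℕ) :
    backDiff A k = A k - if k = 0 then 0 else A (k - 1) := rfl

theorem backDiff_const (c : R) : backDiff (fun _ => c) = fun k => if k = 0 then c else 0 := by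
  ext k
  rcases k with _ | k <;> simp [backDiff_apply]

theorem backDiff_cumMult (m : ℕ → ℕ) :
    backDiff (fun k => (cumMult m k : R)) = fun k => (m k : R) := by
  ext k
  rcases k with _ | k
  · simp [backDiff_apply, cumMult]
  · simp [backDiff_apply, cumMult, Finset.sum_range_succ _ (k + 1)]

theorem sum_range_succ_backDiff_mul (A E : ℕ → R) (N : ℕ) :
    ∑ k ∈ range (N + 1), backDiff A k * E k
      = ∑ k ∈ range N, A k * (E k - E (k + 1)) + A N * E N := by
  induction N with
  | zero => simp [backDiff_apply]
  | succ N ih =>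
    rw [Finset.sum_range_succ, ih, Finset.sum_range_succ, backDiff_apply]
    simp only [Nat.add_one_ne_zero, if_false, Nat.add_sub_cancel]
    ring

end BackDiff

theorem tsum_mem_of_sum_range_succ_mem {α : Type*} [AddCommMonoid α] [TopologicalSpace α]
    {f : ℕ → α} {s : Set α} (hs : IsClosed s) (h0 : 0 ∈ s)
    (h : ∀ N, ∑ k ∈ range (N + 1), f k ∈ s) : ∑' k, f k ∈ s := by
  by_cases hf : Summable f
  · exact hs.mem_of_tendsto (hf.hasSum.tendsto_sum_nat.comp (tendsto_add_atTop_nat 1))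
      (Eventually.of_forall h)
  · rwa [tsum_eq_zero_of_not_summable hf]

section AbelSummation

variable {E : ℕ → ℝ} (hE0 : ∀ k, 0 ≤ E k) (hE : Antitone E)
include hE0 hE

theorem sum_range_succ_backDiff_mul_nonneg {A : ℕ → ℝ} (hA : ∀ k, 0 ≤ A k) (N : ℕ) :
    0 ≤ ∑ k ∈ range (N + 1), backDiff A k * E k := by
  rw [sum_range_succ_backDiff_mul]
  have hΔ : ∀ k, 0 ≤ E k - E (k + 1) := fun k => sub_nonneg.2 (hE k.le_succ)
  exact add_nonneg (sum_nonneg fun k _ => mul_nonneg (hA k) (hΔ k)) (mul_nonneg (hA N) (hE0 N))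

theorem sum_range_succ_backDiff_mul_mono {A B : ℕ → ℝ} (hAB : ∀ k, A k ≤ B k) (N : ℕ) :
    ∑ k ∈ range (N + 1), backDiff A k * E k ≤ ∑ k ∈ range (N + 1), backDiff B k * E k := by
  have := sum_range_succ_backDiff_mul_nonneg hE0 hE (A := B - A)
    (fun k => sub_nonneg.2 (hAB k)) N
  simpa only [map_sub, Pi.sub_apply, sub_mul, sum_sub_distrib, sub_nonneg] using this

theorem abs_sum_range_succ_backDiff_mul_le {A B : ℕ → ℝ} (hAB : ∀ k, |A k| ≤ B k) (N : ℕ) :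
    |∑ k ∈ range (N + 1), backDiff A k * E k| ≤ ∑ k ∈ range (N + 1), backDiff B k * E k := by
  have hupper := sum_range_succ_backDiff_mul_mono hE0 hE (fun k => (abs_le.1 (hAB k)).2) N
  have hlower := sum_range_succ_backDiff_mul_mono hE0 hE (A := -B)
    (fun k => (abs_le.1 (hAB k)).1) N
  simp only [map_neg, Pi.neg_apply, neg_mul, sum_neg_distrib] at hlower
  exact abs_le.2 ⟨hlower, hupper⟩

theorem tsum_backDiff_mul_nonneg {A : ℕ → ℝ} (hA : ∀ k, 0 ≤ A k) :
    0 ≤ ∑' k, backDiff A k * E k :=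
  tsum_mem_of_sum_range_succ_mem (f := fun k => backDiff A k * E k) isClosed_Ici Set.self_mem_Ici
    (sum_range_succ_backDiff_mul_nonneg hE0 hE hA)

theorem abs_tsum_backDiff_mul_le {m : ℕ → ℕ} (hmE : Summable fun k => (m k : ℝ) * E k)
    {A : ℕ → ℝ} {C K : ℝ} (hK : 0 ≤ K) (hA : ∀ k, |A k| ≤ C + K * cumMult m k) :
    |∑' k, backDiff A k * E k| ≤ C * E 0 + K * ∑' k, (m k : ℝ) * E k := by
  have hpartial (N : ℕ) :
      ∑ k ∈ range (N + 1), backDiff (fun k => C + K * cumMult m k) k * E k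
        = C * E 0 + K * ∑ k ∈ range (N + 1), (m k : ℝ) * E k := by
    have hB : (fun k => C + K * (cumMult m k : ℝ))
        = (fun _ => C) + K • fun k => (cumMult m k : ℝ) := rfl
    simp [hB, backDiff_const, backDiff_cumMult, add_mul, sum_add_distrib, mul_sum, mul_assoc]
  have hbound (N : ℕ) :
      |∑ k ∈ range (N + 1), backDiff A k * E k| ≤ C * E 0 + K * ∑' k, (m k : ℝ) * E k := by
    refine (abs_sum_range_succ_backDiff_mul_le hE0 hE hA N).trans ?_
    rw [hpartial]
    gcongr
    exact hmE.sum_le_tsum _ fun k _ => mul_nonneg (Nat.cast_nonneg _) (hE0 k)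
  refine tsum_mem_of_sum_range_succ_mem (f := fun k => backDiff A k * E k)
    (s := {x | |x| ≤ C * E 0 + K * ∑' k, (m k : ℝ) * E k})
    (isClosed_le continuous_abs continuous_const) ?_ hbound
  simpa using (abs_nonneg _).trans (hbound 0)

end AbelSummation

noncomputable def abelMean (r : ℕ → ℝ) (m : ℕ → ℕ) (t : ℝ) (A : ℕ → ℝ) : ℝ :=
  (partitionZ r m t)⁻¹ * ∑' k, backDiff A k * Real.exp (-t * r k)

theorem frohlichTransfer_eq (ω : (ℕ → ℝ) →ₗ[ℝ] ℝ) (r : ℕ → ℝ) (m : ℕ → ℕ) (β : ℝ)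
    (b : ℕ → ℝ) :
    frohlichTransfer ω r m β b
      = ω fun n => abelMean r m (β + 1 / (n + 1)) fun k => cumMult m k * b (cumMult m k - 1) :=
  rfl

section AbelMean

variable {r : ℕ → ℝ} {m : ℕ → ℕ} {t : ℝ}

theorem antitone_exp_neg_mul (hr : Monotone r) (ht : 0 ≤ t) :
    Antitone fun k => Real.exp (-t * r k) :=
  fun _ _ hkl => Real.exp_le_exp.2 (by nlinarith [hr hkl])

theorem partitionZ_pos (hm0 : 0 < m 0)
    (hZ : Summable fun k => (m k : ℝ) * Real.exp (-t * r k)) : 0 < partitionZ r m t :=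
  hZ.tsum_pos (fun k => by positivity) 0 (by positivity)

theorem abelMean_nonneg (hr : Monotone r) (ht : 0 ≤ t) {A : ℕ → ℝ} (hA : ∀ k, 0 ≤ A k) :
    0 ≤ abelMean r m t A :=
  mul_nonneg (inv_nonneg.2 (tsum_nonneg fun k => by positivity))
    (tsum_backDiff_mul_nonneg (fun k => (Real.exp_pos _).le) (antitone_exp_neg_mul hr ht) hA)

theorem abelMean_cumMult (hm0 : 0 < m 0)
    (hZ : Summable fun k => (m k : ℝ) * Real.exp (-t * r k)) :
    abelMean r m t (fun k => cumMult m k) = 1 := by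
  rw [abelMean, backDiff_cumMult]
  exact inv_mul_cancel₀ (partitionZ_pos hm0 hZ).ne'

theorem abs_abelMean_le (hr : Monotone r) (hr0 : 0 ≤ r 0) (ht : 0 ≤ t) (hm0 : 0 < m 0)
    (hZ : Summable fun k => (m k : ℝ) * Real.exp (-t * r k))
    {A : ℕ → ℝ} {C K : ℝ} (hC : 0 ≤ C) (hK : 0 ≤ K) (hA : ∀ k, |A k| ≤ C + K * cumMult m k) :
    |abelMean r m t A| ≤ C / partitionZ r m t + K := by
  have hZpos := partitionZ_pos hm0 hZ
  have hexp_le_one : Real.exp (-t * r 0) ≤ 1 := Real.exp_le_one_iff.2 (by nlinarith)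
  have hsum := abs_tsum_backDiff_mul_le (fun k => (Real.exp_pos _).le)
    (antitone_exp_neg_mul hr ht) hZ hK hA
  calc |abelMean r m t A|
      = (partitionZ r m t)⁻¹ * |∑' k, backDiff A k * Real.exp (-t * r k)| := by
        rw [abelMean, abs_mul, abs_of_pos (inv_pos.2 hZpos)]
    _ ≤ (partitionZ r m t)⁻¹ * (C + K * partitionZ r m t) := by
        gcongr
        exact hsum.trans (by rw [partitionZ]; gcongr; exact mul_le_of_le_one_right hC hexp_le_one)
    _ = C / partitionZ r m t + K := by field_simp

end AbelMean

theorem abs_mul_apply_sub_one_le {b : ℕ → ℝ} {K ε : ℝ} {N₀ : ℕ} (hK : ∀ j, |b j| ≤ K)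
    (hε : ∀ j ≥ N₀, |b j| ≤ ε) (M : ℕ) : |M * b (M - 1)| ≤ K * N₀ + ε * M := by
  have hK0 : 0 ≤ K := (abs_nonneg _).trans (hK 0)
  have hε0 : 0 ≤ ε := (abs_nonneg _).trans (hε N₀ le_rfl)
  rw [abs_mul, Nat.abs_cast]
  by_cases hM : N₀ ≤ M - 1
  · nlinarith [hε _ hM, (Nat.cast_nonneg M : (0 : ℝ) ≤ M)]
  · have : (M : ℝ) ≤ N₀ := by exact_mod_cast (by omega : M ≤ N₀)
    nlinarith [hK (M - 1), abs_nonneg (b (M - 1)), (Nat.cast_nonneg M : (0 : ℝ) ≤ M)]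

theorem tendsto_zero_of_abs_le_div_add {x Z : ℕ → ℝ} (hZ : Tendsto Z atTop atTop)
    (hx : ∀ ε > 0, ∃ C, ∀ n, |x n| ≤ C / Z n + ε) : Tendsto x atTop (𝓝 0) := by
  rw [Metric.tendsto_atTop]
  intro ε hε
  obtain ⟨C, hC⟩ := hx (ε / 2) (half_pos hε)
  have hsmall : ∀ᶠ n in atTop, C / Z n < ε / 2 :=
    (tendsto_const_nhds.div_atTop hZ).eventually (gt_mem_nhds (half_pos hε))
  obtain ⟨N, hN⟩ := eventually_atTop.1 hsmall
  refine ⟨N, fun n hn => ?_⟩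
  rw [Real.dist_eq, sub_zero]
  linarith [hC n, hN n hn]

theorem tendsto_add_one_div_nhdsGT (β : ℝ) :
    Tendsto (fun n : ℕ => β + 1 / ((n : ℝ) + 1)) atTop (𝓝[>] β) := by
  refine tendsto_nhdsWithin_iff.2 ⟨?_, Eventually.of_forall fun n => ?_⟩
  · simpa using tendsto_const_nhds.add (tendsto_one_div_add_atTop_nhds_zero_nat (𝕜 := ℝ))
  · simp only [Set.mem_Ioi, lt_add_iff_pos_right]
    positivity

theorem frohlichTransfer_is_extended_limit_general
    (ω : (ℕ → ℝ) →ₗ[ℝ] ℝ)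
    (hωpos : ∀ b : ℕ → ℝ, (∃ K : ℝ, ∀ n, |b n| ≤ K) → (∀ n, 0 ≤ b n) → 0 ≤ ω b)
    (hωone : ω (fun _ => 1) = 1)
    (hωc0 : ∀ b : ℕ → ℝ, Tendsto b atTop (nhds 0) → ω b = 0)
    (r : ℕ → ℝ) (hr : StrictMono r) (hr0 : ∀ k, 0 ≤ r k)
    (m : ℕ → ℕ) (hm : ∀ k, 1 ≤ m k)
    (β : ℝ) (hβ : 0 ≤ β)
    (hZfin : ∀ t : ℝ, β < t → Summable (fun k : ℕ => (m k : ℝ) * Real.exp (-t * r k)))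
    (hZtop : Tendsto (partitionZ r m) (nhdsWithin β (Set.Ioi β)) atTop) :
    (∀ b : ℕ → ℝ, (∃ K : ℝ, ∀ n, |b n| ≤ K) → (∀ n, 0 ≤ b n) →
        0 ≤ frohlichTransfer ω r m β b)
    ∧ frohlichTransfer ω r m β (fun _ => 1) = 1
    ∧ (∀ b : ℕ → ℝ, Tendsto b atTop (nhds 0) → frohlichTransfer ω r m β b = 0) := by
  have hβt (n : ℕ) : β < β + 1 / ((n : ℝ) + 1) := lt_add_of_pos_right β (by positivity)
  have ht (n : ℕ) : 0 ≤ β + 1 / ((n : ℝ) + 1) := hβ.trans (hβt n).le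
  have hZ := hZtop.comp (tendsto_add_one_div_nhdsGT β)
  have hmean (n : ℕ) {A : ℕ → ℝ} {C K : ℝ} (hC : 0 ≤ C) (hK : 0 ≤ K)
      (hA : ∀ k, |A k| ≤ C + K * cumMult m k) :=
    abs_abelMean_le hr.monotone (hr0 0) (ht n) (hm 0) (hZfin _ (hβt n)) hC hK hA
  refine ⟨fun b ⟨K, hbK⟩ hb0 => ?_, ?_, fun b hb => ?_⟩
  · have hK : 0 ≤ K := (abs_nonneg _).trans (hbK 0)
    rw [frohlichTransfer_eq]
    refine hωpos _ ⟨K, fun n => ?_⟩ fun n => abelMean_nonneg hr.monotone (ht n) fun k => by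
      have := hb0 (cumMult m k - 1); positivity
    refine (hmean n le_rfl hK fun k => ?_).trans (by simp)
    rw [zero_add, abs_mul, Nat.abs_cast, mul_comm K]
    gcongr
    exact hbK _
  · simp only [frohlichTransfer_eq, mul_one, abelMean_cumMult (hm 0) (hZfin _ (hβt _))]
    exact hωone
  · obtain ⟨K, hbK⟩ := hb.abs.bddAbove_range
    rw [frohlichTransfer_eq]
    refine hωc0 _ (tendsto_zero_of_abs_le_div_add hZ fun ε hε => ?_)
    obtain ⟨N₀, hN₀⟩ := eventually_atTop.1 (hb.abs.eventually (ge_mem_nhds (by rwa [abs_zero])))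
    have hbound := abs_mul_apply_sub_one_le (fun j => hbK ⟨j, rfl⟩) hN₀
    refine ⟨K * N₀, fun n => hmean n ?_ hε.le fun k => hbound _⟩
    exact mul_nonneg ((abs_nonneg _).trans (hbK ⟨0, rfl⟩)) (Nat.cast_nonneg _)

/-- If `ω` is an extended limit (a positive normalised linear functional on
bounded sequences vanishing on sequences tending to `0`), `(r_k)` is a strictly increasing
unbounded sequence of nonnegative reals with multiplicities `m_k ≥ 1`,
`Z(t) = ∑ₖ m_k e^{−t r_k}` is finite for `t > β` and `Z(t) → ∞` as `t ↓ β`, then the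
transferred functional `ω̂` is again an extended limit: positive on bounded nonnegative
sequences, normalised, and vanishing on sequences converging to `0`. -/
theorem frohlichTransfer_is_extended_limit
    (ω : (ℕ → ℝ) →ₗ[ℝ] ℝ)
    (hωpos : ∀ b : ℕ → ℝ, (∃ K : ℝ, ∀ n, |b n| ≤ K) → (∀ n, 0 ≤ b n) → 0 ≤ ω b)
    (hωone : ω (fun _ => 1) = 1)
    (hωc0 : ∀ b : ℕ → ℝ, Tendsto b atTop (nhds 0) → ω b = 0)
    (r : ℕ → ℝ) (hr : StrictMono r) (hr0 : ∀ k, 0 ≤ r k)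
    (hrtop : Tendsto r atTop atTop)
    (m : ℕ → ℕ) (hm : ∀ k, 1 ≤ m k)
    (β : ℝ) (hβ : 0 ≤ β)
    (hZfin : ∀ t : ℝ, β < t → Summable (fun k : ℕ => (m k : ℝ) * Real.exp (-t * r k)))
    (hZtop : Tendsto (partitionZ r m) (nhdsWithin β (Set.Ioi β)) atTop) :
    (∀ b : ℕ → ℝ, (∃ K : ℝ, ∀ n, |b n| ≤ K) → (∀ n, 0 ≤ b n) →
        0 ≤ frohlichTransfer ω r m β b)
    ∧ frohlichTransfer ω r m β (fun _ => 1) = 1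
    ∧ (∀ b : ℕ → ℝ, Tendsto b atTop (nhds 0) → frohlichTransfer ω r m β b = 0) :=
  frohlichTransfer_is_extended_limit_general ω hωpos hωone hωc0 r hr hr0 m hm β hβ hZfin hZtop
end

section
/- Let (c_j) be a bounded sequence of complex numbers, and let (r_k), (m_k), Z(t), M_k be as in the Fröhlich setup with Z(t) → ∞ as t ↓ β. If the partial averages A_n := (1/M_{k(n)}) ∑_{j < M_{k(n)}} c_j converge to L along the sequence of spectral levels, then the weighted averages Z(t)^{−1} ∑_k (∑_{λ_j = r_k} c_j) e^{−t r_k} converge to L as t ↓ β. -/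
open Filter Finset

lemma abel_partial {R : Type*} [CommRing R] (b E : ℕ → R) (n : ℕ) :
    ∑ k ∈ range (n+1), b k * E k
      = ∑ k ∈ range n, (∑ i ∈ range (k+1), b i) * (E k - E (k+1))
        + (∑ i ∈ range (n+1), b i) * E n := by
  induction n with
  | zero => simp
  | succ n ih =>
    rw [sum_range_succ, ih,
      sum_range_succ (fun k => (∑ i ∈ range (k+1), b i) * (E k - E (k+1))) n,
      sum_range_succ b (n+1), sum_range_succ b n]
    ring

lemma sum_blocks {R : Type*} [AddCommMonoid R] (m : ℕ → ℕ) (f : ℕ → R) (n : ℕ) :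
    ∑ j ∈ range (∑ i ∈ range (n+1), m i), f j
      = ∑ k ∈ range (n+1), ∑ j ∈ Finset.Ico (∑ i ∈ range k, m i) (∑ i ∈ range (k+1), m i), f j := by
  induction n with
  | zero =>
    rw [sum_range_one (f := fun k => ∑ j ∈ Finset.Ico (∑ i ∈ range k, m i) (∑ i ∈ range (k+1), m i), f j),
      Finset.range_eq_Ico]
    norm_num
  | succ n ih =>
    have h : (∑ i ∈ range (n+1), m i) ≤ ∑ i ∈ range (n+1+1), m i :=
      Finset.sum_le_sum_of_subset (range_subset_range.2 (Nat.le_succ _))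
    have key := Finset.sum_Ico_consecutive f (Nat.zero_le (∑ i ∈ range (n+1), m i)) h
    rw [← Finset.range_eq_Ico] at key
    rw [sum_range_succ (fun k => ∑ j ∈ Finset.Ico (∑ i ∈ range k, m i) (∑ i ∈ range (k+1), m i), f j),
      ← ih]
    simpa only [Finset.range_eq_Ico] using key.symm


lemma Me_tendsto_zero (r : ℕ → ℝ) (hr : Monotone r) (m : ℕ → ℕ)
    (hrtop : Tendsto r atTop atTop) (t t' : ℝ) (ht' : 0 ≤ t') (htt' : t' < t)
    (hZ' : Summable fun k : ℕ => (m k : ℝ) * Real.exp (-t' * r k)) :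
    Tendsto (fun n : ℕ => ((∑ i ∈ range (n+1), m i : ℕ) : ℝ) * Real.exp (-t * r n))
      atTop (nhds 0) := by
  set Z' := ∑' k : ℕ, (m k : ℝ) * Real.exp (-t' * r k) with hZ'def
  have hnn : ∀ k : ℕ, 0 ≤ (m k : ℝ) * Real.exp (-t' * r k) := fun k =>
    mul_nonneg (Nat.cast_nonneg _) (Real.exp_pos _).le
  have hbound : ∀ n : ℕ, ((∑ i ∈ range (n+1), m i : ℕ) : ℝ) * Real.exp (-t * r n)
      ≤ Z' * Real.exp (-(t - t') * r n) := by
    intro n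
    have h1 : ((∑ i ∈ range (n+1), m i : ℕ) : ℝ) * Real.exp (-t * r n)
        = ∑ i ∈ range (n+1), ((m i : ℝ) * Real.exp (-t * r n)) := by
      push_cast; rw [sum_mul]
    rw [h1]
    have h2 : ∀ i ∈ range (n+1), (m i : ℝ) * Real.exp (-t * r n)
        ≤ ((m i : ℝ) * Real.exp (-t' * r i)) * Real.exp (-(t - t') * r n) := by
      intro i hi
      have hin : i ≤ n := Nat.lt_succ_iff.mp (mem_range.mp hi)
      rw [mul_assoc, ← Real.exp_add]
      refine mul_le_mul_of_nonneg_left (Real.exp_le_exp.2 ?_) (Nat.cast_nonneg _)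
      have h3 : t' * r i ≤ t' * r n := mul_le_mul_of_nonneg_left (hr hin) ht'
      nlinarith [h3]
    refine (sum_le_sum h2).trans ?_
    rw [← sum_mul]
    refine mul_le_mul_of_nonneg_right ?_ (Real.exp_pos _).le
    exact Summable.sum_le_tsum _ (fun k _ => hnn k) hZ'
  have hexp : Tendsto (fun n : ℕ => Z' * Real.exp (-(t - t') * r n)) atTop (nhds 0) := by
    have h1 : Tendsto (fun n : ℕ => (-(t - t')) * r n) atTop atBot :=
      hrtop.const_mul_atTop_of_neg (by linarith)
    have h2 := Real.tendsto_exp_atBot.comp h1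
    have h3 := h2.const_mul Z'
    simpa using h3
  exact squeeze_zero (fun n => mul_nonneg (Nat.cast_nonneg _) (Real.exp_pos _).le) hbound hexp

lemma abel_core (mr : ℕ → ℝ) (e : ℕ → ℝ) (b : ℕ → ℂ) (T : ℕ → ℂ) (M : ℕ → ℝ)
    (hbT : ∀ n, ∑ k ∈ range (n+1), b k = T n)
    (hmM : ∀ n, ∑ i ∈ range (n+1), mr i = M n)
    (hm0 : ∀ k, 0 ≤ mr k)
    (he0 : ∀ k, 0 ≤ e k) (he1 : ∀ k, e k ≤ 1) (hanti : ∀ k, e (k+1) ≤ e k)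
    (hZt : Summable fun k => mr k * e k)
    (hMe : Tendsto (fun n => M n * e n) atTop (nhds 0))
    (C : ℝ) (hb : ∀ k, ‖b k‖ ≤ C * mr k)
    (K : ℕ) (ε4 : ℝ) (hε4 : 0 ≤ ε4)
    (hK : ∀ k, K ≤ k → ‖T k‖ ≤ ε4 * M k) :
    ‖∑' k : ℕ, b k * (e k : ℂ)‖
      ≤ (∑ k ∈ range K, ‖T k‖) + ε4 * ∑' k : ℕ, mr k * e k := by
  have hu0 : ∀ k, 0 ≤ e k - e (k+1) := fun k => sub_nonneg.2 (hanti k)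
  have hu1 : ∀ k, e k - e (k+1) ≤ 1 := fun k => by
    have := he0 (k+1); have := he1 k; linarith
  have hM0 : ∀ n, 0 ≤ M n := fun n => by
    rw [← hmM]; exact sum_nonneg fun i _ => hm0 i
  have hTM : ∀ n, ‖T n‖ ≤ C * M n := fun n => by
    rw [← hbT, ← hmM, mul_sum]
    exact (norm_sum_le _ _).trans (sum_le_sum fun i _ => hb i)
  have hbe_sum : Summable (fun k => b k * (e k : ℂ)) := by
    refine Summable.of_norm_bounded (hZt.mul_left C) fun k => ?_
    show ‖b k * (e k : ℂ)‖ ≤ C * (mr k * e k)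
    rw [norm_mul, Complex.norm_real, Real.norm_of_nonneg (he0 k), ← mul_assoc]
    exact mul_le_mul_of_nonneg_right (hb k) (he0 k)
  have habelM : ∀ n, ∑ k ∈ range n, M k * (e k - e (k+1))
      = (∑ k ∈ range (n+1), mr k * e k) - M n * e n := by
    intro n
    have h := abel_partial mr e n
    simp only [hmM] at h
    rw [h]; ring
  have hMu_sum : Summable fun k => M k * (e k - e (k+1)) := by
    refine summable_of_sum_range_le (c := ∑' k, mr k * e k) (fun k => mul_nonneg (hM0 k) (hu0 k)) fun n => ?_
    rw [habelM n]
    have h1 : ∑ k ∈ range (n+1), mr k * e k ≤ ∑' k, mr k * e k :=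
      Summable.sum_le_tsum _ (fun k _ => mul_nonneg (hm0 k) (he0 k)) hZt
    have h2 : 0 ≤ M n * e n := mul_nonneg (hM0 n) (he0 n)
    linarith
  have hMu_tsum : ∑' k, M k * (e k - e (k+1)) = ∑' k, mr k * e k := by
    refine tendsto_nhds_unique hMu_sum.hasSum.tendsto_sum_nat ?_
    have h1 : Tendsto (fun n : ℕ => ∑ k ∈ range (n+1), mr k * e k) atTop
        (nhds (∑' k, mr k * e k)) :=
      hZt.hasSum.tendsto_sum_nat.comp (tendsto_add_atTop_nat 1)
    have h2 := h1.sub hMe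
    rw [sub_zero] at h2
    exact h2.congr fun n => (habelM n).symm
  have habelb : ∀ n, ∑ k ∈ range n, T k * ((e k - e (k+1) : ℝ) : ℂ)
      = (∑ k ∈ range (n+1), b k * (e k : ℂ)) - T n * (e n : ℂ) := by
    intro n
    have h := abel_partial b (fun k => ((e k : ℝ) : ℂ)) n
    simp only [hbT] at h
    rw [h]
    push_cast
    ring
  have hnorm_sum : Summable (fun k => ‖T k‖ * (e k - e (k+1))) := by
    refine Summable.of_nonneg_of_le
      (fun k => mul_nonneg (norm_nonneg _) (hu0 k))
      (fun k => mul_le_mul_of_nonneg_right (hTM k) (hu0 k))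
      ((hMu_sum.mul_left C).congr fun k => (mul_assoc _ _ _).symm)
  have hTu_sum : Summable (fun k => T k * ((e k - e (k+1) : ℝ) : ℂ)) := by
    refine Summable.of_norm_bounded hnorm_sum fun k => ?_
    rw [norm_mul, Complex.norm_real, Real.norm_of_nonneg (hu0 k)]
  have hTe : Tendsto (fun n => T n * (e n : ℂ)) atTop (nhds 0) := by
    refine squeeze_zero_norm (fun n => ?_) (by simpa using hMe.const_mul C)
    rw [norm_mul, Complex.norm_real, Real.norm_of_nonneg (he0 n), ← mul_assoc]
    exact mul_le_mul_of_nonneg_right (hTM n) (he0 n)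
  have htsum_eq : ∑' k, T k * ((e k - e (k+1) : ℝ) : ℂ) = ∑' k, b k * (e k : ℂ) := by
    refine tendsto_nhds_unique hTu_sum.hasSum.tendsto_sum_nat ?_
    have h1 : Tendsto (fun n : ℕ => ∑ k ∈ range (n+1), b k * (e k : ℂ)) atTop
        (nhds (∑' k, b k * (e k : ℂ))) :=
      hbe_sum.hasSum.tendsto_sum_nat.comp (tendsto_add_atTop_nat 1)
    have h2 := h1.sub hTe
    rw [sub_zero] at h2
    exact h2.congr fun n => (habelb n).symm
  have hnormeq : ∀ k, ‖T k * ((e k - e (k+1) : ℝ) : ℂ)‖ = ‖T k‖ * (e k - e (k+1)) :=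
    fun k => by rw [norm_mul, Complex.norm_real, Real.norm_of_nonneg (hu0 k)]
  have h3 : ‖∑' k, b k * (e k : ℂ)‖ ≤ ∑' k, ‖T k‖ * (e k - e (k+1)) := by
    rw [← htsum_eq]
    exact (norm_tsum_le_tsum_norm (hnorm_sum.congr fun k => (hnormeq k).symm)).trans_eq
      (tsum_congr hnormeq)
  refine h3.trans ?_
  rw [← Summable.sum_add_tsum_nat_add K hnorm_sum]
  refine add_le_add ?_ ?_
  · refine sum_le_sum fun k _ => ?_
    calc ‖T k‖ * (e k - e (k+1)) ≤ ‖T k‖ * 1 :=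
          mul_le_mul_of_nonneg_left (hu1 k) (norm_nonneg _)
      _ = ‖T k‖ := mul_one _
  · have h5 : ∑' k : ℕ, ‖T (k + K)‖ * (e (k + K) - e (k + K + 1))
        ≤ ∑' k : ℕ, ε4 * (M (k + K) * (e (k + K) - e (k + K + 1))) := by
      refine Summable.tsum_le_tsum (fun k => ?_) ((summable_nat_add_iff K).2 hnorm_sum)
        (((summable_nat_add_iff K).2 hMu_sum).mul_left ε4)
      rw [← mul_assoc]
      exact mul_le_mul_of_nonneg_right (hK (k + K) (Nat.le_add_left _ _)) (hu0 _)
    refine h5.trans ?_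
    rw [tsum_mul_left]
    refine mul_le_mul_of_nonneg_left ?_ hε4
    rw [← hMu_tsum, ← Summable.sum_add_tsum_nat_add K hMu_sum]
    exact le_add_of_nonneg_left (sum_nonneg fun k _ => mul_nonneg (hM0 k) (hu0 k))


lemma summable_be (mr e : ℕ → ℝ) (he0 : ∀ k, 0 ≤ e k) (b : ℕ → ℂ) (C : ℝ)
    (hb : ∀ k, ‖b k‖ ≤ C * mr k) (hZt : Summable fun k => mr k * e k) :
    Summable fun k => b k * (e k : ℂ) := by
  refine Summable.of_norm_bounded (hZt.mul_left C) fun k => ?_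
  show ‖b k * (e k : ℂ)‖ ≤ C * (mr k * e k)
  rw [norm_mul, Complex.norm_real, Real.norm_of_nonneg (he0 k), ← mul_assoc]
  exact mul_le_mul_of_nonneg_right (hb k) (he0 k)



/-- Abelian theorem, continuous version of Hardy, Thm III.5.
`(c_j)` is a bounded sequence; `λ_j` lists the strictly increasing levels `r_k` with
multiplicities `m_k ≥ 1`, so that the block of indices at level `k` is
`[∑_{j<k} m_j, ∑_{j<k+1} m_j)` and `M_k = ∑_{j≤k} m_j`; `Z(t) = ∑ₖ m_k e^{−t r_k}` is finite
for `t > β` and tends to `∞` as `t ↓ β`.  If the partial averages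
`(1/M_k) ∑_{j < M_k} c_j` converge to `L` along the spectral levels, then the weighted
averages `Z(t)⁻¹ ∑ₖ (∑_{λ_j = r_k} c_j) e^{−t r_k}` converge to `L` as `t ↓ β`. -/
theorem abel_mean_tendsto_of_spectral_averages_tendsto
    (r : ℕ → ℝ) (hr : StrictMono r) (hr0 : ∀ k, 0 ≤ r k)
    (hrtop : Tendsto r atTop atTop)
    (m : ℕ → ℕ) (hm : ∀ k, 1 ≤ m k)
    (β : ℝ) (hβ : 0 ≤ β)
    (hZfin : ∀ t : ℝ, β < t → Summable (fun k : ℕ => (m k : ℝ) * Real.exp (-t * r k)))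
    (hZtop : Tendsto (fun t : ℝ => ∑' k, (m k : ℝ) * Real.exp (-t * r k))
      (nhdsWithin β (Set.Ioi β)) atTop)
    (c : ℕ → ℂ) (hc : ∃ K : ℝ, ∀ j, ‖c j‖ ≤ K) (L : ℂ)
    (havg : Tendsto (fun k : ℕ =>
        (∑ j ∈ range (∑ i ∈ range (k + 1), m i), c j) / ((∑ i ∈ range (k + 1), m i : ℕ) : ℂ))
      atTop (nhds L)) :
    Tendsto (fun t : ℝ =>
        (∑' k : ℕ, (∑ j ∈ Finset.Ico (∑ i ∈ range k, m i) (∑ i ∈ range (k + 1), m i), c j)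
            * (Real.exp (-t * r k) : ℂ))
          / ((∑' k : ℕ, (m k : ℝ) * Real.exp (-t * r k) : ℝ) : ℂ))
      (nhdsWithin β (Set.Ioi β)) (nhds L) := by
  obtain ⟨K0, hK0⟩ := hc
  set C : ℝ := K0 + ‖L‖ with hCdef
  have hd : ∀ j, ‖c j - L‖ ≤ C := fun j =>
    (norm_sub_le _ _).trans (add_le_add_left (hK0 j) _)
  -- block cardinalities
  have hcard : ∀ k : ℕ,
      (Finset.Ico (∑ i ∈ range k, m i) (∑ i ∈ range (k + 1), m i)).card = m k := by
    intro k
    rw [Nat.card_Ico, sum_range_succ, Nat.add_sub_cancel_left]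
  have hbnorm : ∀ k : ℕ,
      ‖∑ j ∈ Finset.Ico (∑ i ∈ range k, m i) (∑ i ∈ range (k + 1), m i), (c j - L)‖
        ≤ C * (m k : ℝ) := by
    intro k
    calc ‖∑ j ∈ Finset.Ico (∑ i ∈ range k, m i) (∑ i ∈ range (k + 1), m i), (c j - L)‖
        ≤ ∑ j ∈ Finset.Ico (∑ i ∈ range k, m i) (∑ i ∈ range (k + 1), m i), ‖c j - L‖ :=
          norm_sum_le _ _
      _ ≤ ∑ j ∈ Finset.Ico (∑ i ∈ range k, m i) (∑ i ∈ range (k + 1), m i), C :=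
          sum_le_sum fun j _ => hd j
      _ = C * (m k : ℝ) := by rw [sum_const, hcard k, nsmul_eq_mul, mul_comm]
  have hMn1 : ∀ k : ℕ, 1 ≤ ∑ i ∈ range (k + 1), m i := fun k =>
    (hm 0).trans (Finset.single_le_sum (fun i _ => Nat.zero_le _) (mem_range.2 (Nat.succ_pos k)))
  have hMnne : ∀ k : ℕ, ((∑ i ∈ range (k + 1), m i : ℕ) : ℂ) ≠ 0 := fun k =>
    Nat.cast_ne_zero.2 (by have := hMn1 k; omega)
  -- the centered running sums tend to zero relative to M
  have hTtend : Tendsto (fun k : ℕ =>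
      (∑ j ∈ range (∑ i ∈ range (k + 1), m i), (c j - L)) /
        ((∑ i ∈ range (k + 1), m i : ℕ) : ℂ)) atTop (nhds 0) := by
    have h1 := havg.sub_const L
    rw [sub_self] at h1
    refine h1.congr fun k => ?_
    rw [Finset.sum_sub_distrib, sum_const, card_range, nsmul_eq_mul, sub_div,
      mul_div_cancel_left₀ L (hMnne k)]
  -- reduction: it suffices to treat the centered sequence
  suffices h0 : Tendsto (fun t : ℝ =>
      (∑' k : ℕ, (∑ j ∈ Finset.Ico (∑ i ∈ range k, m i) (∑ i ∈ range (k + 1), m i), (c j - L))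
          * (Real.exp (-t * r k) : ℂ))
        / ((∑' k : ℕ, (m k : ℝ) * Real.exp (-t * r k) : ℝ) : ℂ))
      (nhdsWithin β (Set.Ioi β)) (nhds 0) by
    have hev1 : ∀ᶠ t in nhdsWithin β (Set.Ioi β),
        (1 : ℝ) ≤ ∑' k, (m k : ℝ) * Real.exp (-t * r k) :=
      hZtop.eventually (eventually_ge_atTop 1)
    have hev2 : ∀ᶠ t in nhdsWithin β (Set.Ioi β), t ∈ Set.Ioi β := eventually_mem_nhdsWithin
    have heq : ∀ᶠ t in nhdsWithin β (Set.Ioi β),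
        (∑' k : ℕ, (∑ j ∈ Finset.Ico (∑ i ∈ range k, m i) (∑ i ∈ range (k + 1), m i),
              (c j - L)) * (Real.exp (-t * r k) : ℂ))
          / ((∑' k : ℕ, (m k : ℝ) * Real.exp (-t * r k) : ℝ) : ℂ) + L
        = (∑' k : ℕ, (∑ j ∈ Finset.Ico (∑ i ∈ range k, m i) (∑ i ∈ range (k + 1), m i), c j)
            * (Real.exp (-t * r k) : ℂ))
          / ((∑' k : ℕ, (m k : ℝ) * Real.exp (-t * r k) : ℝ) : ℂ) := by
      filter_upwards [hev1, hev2] with t h1 ht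
      have htβ : β < t := ht
      have hZne : ((∑' k : ℕ, (m k : ℝ) * Real.exp (-t * r k) : ℝ) : ℂ) ≠ 0 :=
        Complex.ofReal_ne_zero.2 (by linarith)
      have hbe_sum : Summable (fun k : ℕ =>
          (∑ j ∈ Finset.Ico (∑ i ∈ range k, m i) (∑ i ∈ range (k + 1), m i), (c j - L))
            * (Real.exp (-t * r k) : ℂ)) :=
        summable_be (fun k => (m k : ℝ)) (fun k => Real.exp (-t * r k))
          (fun k => (Real.exp_pos _).le) _ C hbnorm (hZfin t htβ)
      have hsm2 : Summable fun k : ℕ =>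
          L * (((m k : ℝ) * Real.exp (-t * r k) : ℝ) : ℂ) := by
        have h := (hZfin t htβ).mapL Complex.ofRealCLM
        exact (h.congr fun k => by simp [Complex.ofRealCLM_apply]).mul_left L
      have hbc : ∀ k : ℕ,
          ∑ j ∈ Finset.Ico (∑ i ∈ range k, m i) (∑ i ∈ range (k + 1), m i), c j
            = (∑ j ∈ Finset.Ico (∑ i ∈ range k, m i) (∑ i ∈ range (k + 1), m i), (c j - L))
              + (m k : ℂ) * L := by
        intro k
        have h2 : ∑ j ∈ Finset.Ico (∑ i ∈ range k, m i) (∑ i ∈ range (k + 1), m i), L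
            = (m k : ℂ) * L := by rw [sum_const, hcard k, nsmul_eq_mul]
        rw [Finset.sum_sub_distrib, h2]; ring
      have hnum : (∑' k : ℕ, (∑ j ∈ Finset.Ico (∑ i ∈ range k, m i)
              (∑ i ∈ range (k + 1), m i), c j) * (Real.exp (-t * r k) : ℂ))
          = (∑' k : ℕ, (∑ j ∈ Finset.Ico (∑ i ∈ range k, m i) (∑ i ∈ range (k + 1), m i),
              (c j - L)) * (Real.exp (-t * r k) : ℂ))
            + L * ((∑' k : ℕ, (m k : ℝ) * Real.exp (-t * r k) : ℝ) : ℂ) := by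
        calc (∑' k : ℕ, (∑ j ∈ Finset.Ico (∑ i ∈ range k, m i)
                (∑ i ∈ range (k + 1), m i), c j) * (Real.exp (-t * r k) : ℂ))
            = ∑' k : ℕ, ((∑ j ∈ Finset.Ico (∑ i ∈ range k, m i) (∑ i ∈ range (k + 1), m i),
                (c j - L)) * (Real.exp (-t * r k) : ℂ)
              + L * (((m k : ℝ) * Real.exp (-t * r k) : ℝ) : ℂ)) := by
              refine tsum_congr fun k => ?_
              rw [hbc k]
              push_cast
              ring
          _ = _ := by
              rw [Summable.tsum_add hbe_sum hsm2, tsum_mul_left, ← Complex.ofReal_tsum]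
      rw [hnum, add_div, mul_div_assoc, div_self hZne, mul_one]
    have h2 := h0.add_const L
    rw [zero_add] at h2
    exact Tendsto.congr' heq h2
  -- the centered weighted means tend to zero
  rw [NormedAddCommGroup.tendsto_nhds_zero]
  intro ε hε
  have hK' := (NormedAddCommGroup.tendsto_nhds_zero.1 hTtend) (ε / 4) (by positivity)
  rw [eventually_atTop] at hK'
  obtain ⟨K, hK⟩ := hK'
  have hKle : ∀ k, K ≤ k → ‖∑ j ∈ range (∑ i ∈ range (k + 1), m i), (c j - L)‖
      ≤ ε / 4 * ((∑ i ∈ range (k + 1), m i : ℕ) : ℝ) := by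
    intro k hk
    have h := (hK k hk).le
    rw [norm_div, Complex.norm_natCast] at h
    have hpos : (0 : ℝ) < ((∑ i ∈ range (k + 1), m i : ℕ) : ℝ) := by
      exact_mod_cast Nat.lt_of_lt_of_le Nat.zero_lt_one (hMn1 k)
    exact (div_le_iff₀ hpos).1 h
  have hB0 : (0 : ℝ) ≤ ∑ k ∈ range K, ‖∑ j ∈ range (∑ i ∈ range (k + 1), m i), (c j - L)‖ :=
    sum_nonneg fun k _ => norm_nonneg _
  filter_upwards [hZtop.eventually (eventually_ge_atTop
      (2 * ((∑ k ∈ range K, ‖∑ j ∈ range (∑ i ∈ range (k + 1), m i), (c j - L)‖) + 1) / ε)),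
    eventually_mem_nhdsWithin] with t hZge ht
  have htβ : β < t := ht
  have ht0 : 0 < t := lt_of_le_of_lt hβ htβ
  have hbound := abel_core (fun k => (m k : ℝ)) (fun k => Real.exp (-t * r k))
    (fun k => ∑ j ∈ Finset.Ico (∑ i ∈ range k, m i) (∑ i ∈ range (k + 1), m i), (c j - L))
    (fun n => ∑ j ∈ range (∑ i ∈ range (n + 1), m i), (c j - L))
    (fun n => ((∑ i ∈ range (n + 1), m i : ℕ) : ℝ))
    (fun n => (sum_blocks m (fun j => c j - L) n).symm)
    (fun n => (Nat.cast_sum _ _).symm)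
    (fun k => Nat.cast_nonneg _)
    (fun k => (Real.exp_pos _).le)
    (fun k => Real.exp_le_one_iff.2 (by nlinarith [hr0 k, ht0.le]))
    (fun k => Real.exp_le_exp.2 (by nlinarith [hr.monotone (Nat.le_succ k), ht0.le]))
    (hZfin t htβ)
    (Me_tendsto_zero r hr.monotone m hrtop t ((β + t) / 2) (by linarith) (by linarith)
      (hZfin _ (by linarith)))
    C hbnorm K (ε / 4) (by positivity) hKle
  beta_reduce at hbound
  have hZpos : 0 < ∑' k, (m k : ℝ) * Real.exp (-t * r k) :=
    lt_of_lt_of_le (by positivity) hZge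
  rw [norm_div, Complex.norm_real, Real.norm_of_nonneg hZpos.le, div_lt_iff₀ hZpos]
  have h6 : 2 * ((∑ k ∈ range K, ‖∑ j ∈ range (∑ i ∈ range (k + 1), m i), (c j - L)‖) + 1)
      ≤ (∑' k, (m k : ℝ) * Real.exp (-t * r k)) * ε := (div_le_iff₀ hε).1 hZge
  linarith [hbound]
end
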